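/- arXiv:0903.3151 — 5 statements merged into one kernel-verified Lean document; each statement's English description precedes it below -/
import Mathlib

section
/- The vertex Folkman number F_v(2_5; 4) is at most 16; that is, there exists a finite simple graph on 16 vertices that contains no clique on 4 vertices and has chromatic number at least 6. -/
open SimpleGraph

/-- The vertex Folkman number `F_v(2_r; q)`: the minimum number of vertices of a
`K_q`-free finite simple graph with chromatic number at least `r + 1`. -/
noncomputable def folkman (r q : ℕ) : ℕ :=
  sInf {n : ℕ | ∃ G : SimpleGraph (Fin n),
    G.CliqueFree q ∧ (r + 1 : ℕ∞) ≤ G.chromaticNumber}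

/-- Paley(17) restricted to 16 vertices. -/
def paleyAdj (i j : Fin 16) : Bool :=
  decide (((i.val + 17 - j.val) % 17) ∈ ([1, 2, 4, 8, 9, 13, 15, 16] : List ℕ))

def myG : SimpleGraph (Fin 16) := SimpleGraph.fromRel (fun i j => paleyAdj i j = true)

instance : DecidableRel myG.Adj := fun _ _ => by
  unfold myG; unfold fromRel; infer_instance

lemma cliqueFree_four {V : Type*} [DecidableEq V] (G : SimpleGraph V)
    (h : ∀ a b c d : V, G.Adj a b → G.Adj a c → G.Adj a d → G.Adj b c → G.Adj b d →
      G.Adj c d → False) :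
    G.CliqueFree 4 := by
  intro t ht
  obtain ⟨hc, hcard⟩ := ht
  have hpos : 0 < t.card := by omega
  obtain ⟨a, ha⟩ := Finset.card_pos.mp hpos
  have h3 : (t.erase a).card = 3 := by rw [Finset.card_erase_of_mem ha, hcard]
  obtain ⟨b, c, d, hbc, hbd, hcd, he⟩ := Finset.card_eq_three.mp h3
  have hb : b ∈ t.erase a := he ▸ by simp
  have hcm : c ∈ t.erase a := he ▸ by simp
  have hdm : d ∈ t.erase a := he ▸ by simp
  obtain ⟨hba, hb'⟩ := Finset.mem_erase.mp hb
  obtain ⟨hca, hc'⟩ := Finset.mem_erase.mp hcm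
  obtain ⟨hda, hd'⟩ := Finset.mem_erase.mp hdm
  exact h a b c d (hc ha hb' hba.symm) (hc ha hc' hca.symm) (hc ha hd' hda.symm)
    (hc hb' hc' hbc) (hc hb' hd' hbd) (hc hc' hd' hcd)

lemma myG_cliqueFree : myG.CliqueFree 4 :=
  cliqueFree_four myG (by decide)

lemma myG_compl_cliqueFree : myGᶜ.CliqueFree 4 :=
  cliqueFree_four myGᶜ (by decide)

lemma myG_not_colorable : ¬ myG.Colorable 5 := by
  rintro ⟨C⟩
  have hcard : ∀ c : Fin 5, (Finset.univ.filter (fun v => C v = c)).card ≤ 3 := by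
    intro c
    by_contra h
    push_neg at h
    obtain ⟨t, hts, ht4⟩ := Finset.exists_subset_card_eq h
    refine myG_compl_cliqueFree t ⟨?_, ht4⟩
    intro x hx y hy hxy
    rw [SimpleGraph.compl_adj]
    refine ⟨hxy, fun hadj => ?_⟩
    have hx' := Finset.mem_filter.mp (hts hx)
    have hy' := Finset.mem_filter.mp (hts hy)
    exact C.valid hadj (hx'.2.trans hy'.2.symm)
  have h16 : (Finset.univ : Finset (Fin 16)).card =
      ∑ c : Fin 5, (Finset.univ.filter (fun v => C v = c)).card :=
    Finset.card_eq_sum_card_fiberwise (fun x _ => Finset.mem_univ _)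
  have : (16 : ℕ) ≤ 15 := by
    calc (16 : ℕ) = (Finset.univ : Finset (Fin 16)).card := by simp
    _ = ∑ c : Fin 5, (Finset.univ.filter (fun v => C v = c)).card := h16
    _ ≤ ∑ _c : Fin 5, 3 := Finset.sum_le_sum (fun c _ => hcard c)
    _ = 15 := by simp
  omega

lemma myG_chrom : (6 : ℕ∞) ≤ myG.chromaticNumber := by
  by_contra h
  push_neg at h
  have h5 : myG.chromaticNumber ≤ (5 : ℕ) := by
    exact Order.le_of_lt_add_one (by exact_mod_cast h)
  exact myG_not_colorable (SimpleGraph.chromaticNumber_le_iff_colorable.mp h5)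

theorem stmt_2 :
    (∃ G : SimpleGraph (Fin 16),
        G.CliqueFree 4 ∧ (6 : ℕ∞) ≤ G.chromaticNumber) ∧
    folkman 5 4 ≤ 16 := by
  refine ⟨⟨myG, myG_cliqueFree, myG_chrom⟩, Nat.sInf_le ?_⟩
  exact ⟨myG, myG_cliqueFree, myG_chrom⟩
end

section
/- Let r and s be non-negative integers with r ≥ 3s+6. Then F_v(2_r; r−s−1) ≤ r+2s+7; that is, there exists a finite simple graph on r+2s+7 vertices that contains no clique on r−s−1 vertices and has chromatic number at least r+1. -/
open SimpleGraph Finset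

/-! Adjacency of the complement of the circulant C13(1,5) (a (3,5)-Ramsey graph). -/
def hAdj (x y : ZMod 13) : Prop :=
  x - y ≠ 0 ∧ x - y ≠ 1 ∧ x - y ≠ 5 ∧ x - y ≠ 8 ∧ x - y ≠ 12

instance : DecidableRel hAdj := fun x y => by unfold hAdj; infer_instance

/-! Adjacency of the 5-cycle on ZMod 5. -/
def cAdj (x y : ZMod 5) : Prop := x - y = 1 ∨ x - y = 4

instance : DecidableRel cAdj := fun x y => by unfold cAdj; infer_instance

lemma hAdj_symm : ∀ x y : ZMod 13, hAdj x y → hAdj y x := by decide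
lemma hAdj_irrefl : ∀ x : ZMod 13, ¬ hAdj x x := by decide
lemma cAdj_symm : ∀ x y : ZMod 5, cAdj x y → cAdj y x := by decide
lemma cAdj_irrefl : ∀ x : ZMod 5, ¬ cAdj x x := by decide
lemma cAdj_succ : ∀ x : ZMod 5, cAdj (x + 1) x := by decide

/-- Any 3 distinct vertices contain an `hAdj`-edge (independence number ≤ 2). -/
lemma hAdj_three : ∀ x y z : ZMod 13, x ≠ y → x ≠ z → y ≠ z →
    hAdj x y ∨ hAdj x z ∨ hAdj y z := by decide

lemma hAdj_k5 : ∀ b c d e : ZMod 13, hAdj b 0 → hAdj c 0 → hAdj d 0 → hAdj e 0 →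
    hAdj c b → hAdj d b → hAdj e b → hAdj d c → hAdj e c → hAdj e d → False := by decide

lemma hAdj_shift (a x y : ZMod 13) (h : hAdj x y) : hAdj (x - a) (y - a) := by
  unfold hAdj at *
  rwa [sub_sub_sub_cancel_right]

lemma hAdj_shift0 (a x : ZMod 13) (h : hAdj x a) : hAdj (x - a) 0 := by
  have := hAdj_shift a x a h
  rwa [sub_self] at this

/-- `hAdj`-cliques have at most 4 vertices. -/
lemma hAdj_clique : ∀ t : Finset (ZMod 13),
    (∀ x ∈ t, ∀ y ∈ t, x ≠ y → hAdj x y) → t.card ≤ 4 := by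
  intro t ht
  by_contra hcon
  push_neg at hcon
  obtain ⟨a, ha⟩ := Finset.card_pos.mp (show 0 < t.card by omega)
  have c1 : 4 ≤ (t.erase a).card := by
    rw [Finset.card_erase_of_mem ha]; omega
  obtain ⟨b, hb1⟩ := Finset.card_pos.mp (show 0 < (t.erase a).card by omega)
  have c2 : 3 ≤ ((t.erase a).erase b).card := by
    rw [Finset.card_erase_of_mem hb1]; omega
  obtain ⟨c, hc2⟩ := Finset.card_pos.mp (show 0 < ((t.erase a).erase b).card by omega)
  have c3 : 2 ≤ (((t.erase a).erase b).erase c).card := by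
    rw [Finset.card_erase_of_mem hc2]; omega
  obtain ⟨d, hd3⟩ := Finset.card_pos.mp
    (show 0 < (((t.erase a).erase b).erase c).card by omega)
  have c4 : 1 ≤ ((((t.erase a).erase b).erase c).erase d).card := by
    rw [Finset.card_erase_of_mem hd3]; omega
  obtain ⟨e, he4⟩ := Finset.card_pos.mp
    (show 0 < ((((t.erase a).erase b).erase c).erase d).card by omega)
  -- memberships in t
  have hd2 : d ∈ (t.erase a).erase b := Finset.mem_of_mem_erase hd3
  have he3 : e ∈ ((t.erase a).erase b).erase c := Finset.mem_of_mem_erase he4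
  have he2 : e ∈ (t.erase a).erase b := Finset.mem_of_mem_erase he3
  have hct : c ∈ t := Finset.mem_of_mem_erase (Finset.mem_of_mem_erase hc2)
  have hbt : b ∈ t := Finset.mem_of_mem_erase hb1
  have hdt : d ∈ t := Finset.mem_of_mem_erase (Finset.mem_of_mem_erase hd2)
  have het : e ∈ t := Finset.mem_of_mem_erase (Finset.mem_of_mem_erase he2)
  -- distinctness
  have nba : b ≠ a := Finset.ne_of_mem_erase hb1
  have nca : c ≠ a := Finset.ne_of_mem_erase (Finset.mem_of_mem_erase hc2)
  have ncb : c ≠ b := Finset.ne_of_mem_erase hc2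
  have nda : d ≠ a := Finset.ne_of_mem_erase (Finset.mem_of_mem_erase hd2)
  have ndb : d ≠ b := Finset.ne_of_mem_erase hd2
  have ndc : d ≠ c := Finset.ne_of_mem_erase hd3
  have nea : e ≠ a := Finset.ne_of_mem_erase (Finset.mem_of_mem_erase he2)
  have neb : e ≠ b := Finset.ne_of_mem_erase he2
  have nec : e ≠ c := Finset.ne_of_mem_erase he3
  have ned : e ≠ d := Finset.ne_of_mem_erase he4
  exact hAdj_k5 (b - a) (c - a) (d - a) (e - a)
    (hAdj_shift0 a b (ht b hbt a ha nba))
    (hAdj_shift0 a c (ht c hct a ha nca))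
    (hAdj_shift0 a d (ht d hdt a ha nda))
    (hAdj_shift0 a e (ht e het a ha nea))
    (hAdj_shift a c b (ht c hct b hbt ncb))
    (hAdj_shift a d b (ht d hdt b hbt ndb))
    (hAdj_shift a e b (ht e het b hbt neb))
    (hAdj_shift a d c (ht d hdt c hct ndc))
    (hAdj_shift a e c (ht e het c hct nec))
    (hAdj_shift a e d (ht e het d hdt ned))

/-- `cAdj`-cliques have at most 2 vertices. -/
lemma cAdj_clique : ∀ t : Finset (ZMod 5),
    (∀ x ∈ t, ∀ y ∈ t, x ≠ y → cAdj x y) → t.card ≤ 2 := by decide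

/-- Any proper coloring of the 5-cycle uses at least 3 colors. -/
lemma c5_colors {α : Type*} [DecidableEq α] (f : ZMod 5 → α)
    (hf : ∀ x : ZMod 5, f (x + 1) ≠ f x) : 3 ≤ (Finset.univ.image f).card := by
  have key : ∀ a b c : ZMod 5, f a ≠ f b → f a ≠ f c → f b ≠ f c →
      3 ≤ (Finset.univ.image f).card := by
    intro a b c h1 h2 h3
    have : 2 < (Finset.univ.image f).card := by
      rw [Finset.two_lt_card_iff]
      exact ⟨f a, f b, f c, by simp, by simp, by simp, h1, h2, h3⟩
    omega
  have h10 : f 1 ≠ f 0 := by have := hf 0; norm_num at this; exact this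
  have h21 : f 2 ≠ f 1 := by have := hf 1; norm_num at this; exact this
  have h32 : f 3 ≠ f 2 := by have := hf 2; norm_num at this; exact this
  have h43 : f 4 ≠ f 3 := by have := hf 3; norm_num at this; exact this
  have h04 : f 0 ≠ f 4 := by
    have := hf 4
    have e : (4 : ZMod 5) + 1 = 0 := by decide
    rw [e] at this; exact this
  by_cases h20 : f 2 = f 0
  · by_cases h31 : f 3 = f 1
    · exact key 4 1 0 (h31 ▸ h43) (fun hh => h04 hh.symm) h10
    · exact key 3 1 0 h31 (h20 ▸ h32) h10
  · exact key 2 1 0 h21 h20 h10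

/-- Any proper coloring of the graph `hAdj` uses at least 7 colors. -/
lemma h_colors {α : Type*} [DecidableEq α] (g : ZMod 13 → α)
    (hg : ∀ x y, hAdj x y → g x ≠ g y) : 7 ≤ (Finset.univ.image g).card := by
  classical
  have fiber_le : ∀ a ∈ Finset.univ.image g,
      (Finset.univ.filter (fun x => g x = a)).card ≤ 2 := by
    intro a _
    by_contra hc
    push_neg at hc
    rw [Finset.two_lt_card_iff] at hc
    obtain ⟨x, y, z, hx, hy, hz, hxy, hxz, hyz⟩ := hc
    simp only [Finset.mem_filter, Finset.mem_univ, true_and] at hx hy hz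
    rcases hAdj_three x y z hxy hxz hyz with h | h | h
    · exact hg _ _ h (hx.trans hy.symm)
    · exact hg _ _ h (hx.trans hz.symm)
    · exact hg _ _ h (hy.trans hz.symm)
  have hsum := Finset.card_eq_sum_card_fiberwise
    (f := g) (s := Finset.univ) (t := Finset.univ.image g)
    (fun x _ => Finset.mem_image_of_mem g (Finset.mem_univ x))
  have h13 : (Finset.univ : Finset (ZMod 13)).card = 13 := by decide
  have hle : ∑ a ∈ Finset.univ.image g, (Finset.univ.filter (fun x => g x = a)).card
      ≤ ∑ _a ∈ Finset.univ.image g, 2 :=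
    Finset.sum_le_sum fiber_le
  rw [Finset.sum_const, smul_eq_mul] at hle
  omega

/-! ### The vertex type and graph -/

/-- Vertex type: `K_m ⊕ (s copies of C5) ⊕ H`. -/
abbrev FolkV (m s : ℕ) := Fin m ⊕ (Fin s × ZMod 5) ⊕ ZMod 13

/-- Block index type. -/
abbrev FolkB (m s : ℕ) := Fin m ⊕ Fin s ⊕ Unit

def blockIdx {m s : ℕ} : FolkV m s → FolkB m s
  | Sum.inl i => Sum.inl i
  | Sum.inr (Sum.inl p) => Sum.inr (Sum.inl p.1)
  | Sum.inr (Sum.inr _) => Sum.inr (Sum.inr ())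

def localAdj {m s : ℕ} : FolkV m s → FolkV m s → Prop
  | Sum.inr (Sum.inl p), Sum.inr (Sum.inl q) => cAdj p.2 q.2
  | Sum.inr (Sum.inr x), Sum.inr (Sum.inr y) => hAdj x y
  | _, _ => False

/-- The Folkman graph: join of `K_m`, `s` copies of `C5`, and `H`. -/
def folkGraph (m s : ℕ) : SimpleGraph (FolkV m s) where
  Adj u v := blockIdx u ≠ blockIdx v ∨ localAdj u v
  symm := by
    refine ⟨?_⟩
    rintro u v (h | h)
    · exact Or.inl (Ne.symm h)
    · right
      match u, v, h with
      | Sum.inr (Sum.inl p), Sum.inr (Sum.inl q), h => exact cAdj_symm _ _ h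
      | Sum.inr (Sum.inr x), Sum.inr (Sum.inr y), h => exact hAdj_symm _ _ h
  loopless := by
    refine ⟨?_⟩
    rintro u (h | h)
    · exact h rfl
    · match u, h with
      | Sum.inr (Sum.inl p), h => exact cAdj_irrefl _ h
      | Sum.inr (Sum.inr x), h => exact hAdj_irrefl _ h

lemma blockIdx_c5 {m s : ℕ} {a : Fin s} {v : FolkV m s}
    (h : blockIdx v = Sum.inr (Sum.inl a)) : ∃ x, v = Sum.inr (Sum.inl (a, x)) := by
  match v with
  | Sum.inl i => simp [blockIdx] at h
  | Sum.inr (Sum.inl p) =>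
      simp only [blockIdx, Sum.inr.injEq, Sum.inl.injEq] at h
      exact ⟨p.2, by rw [← h]⟩
  | Sum.inr (Sum.inr x) => simp [blockIdx] at h

lemma blockIdx_h {m s : ℕ} {v : FolkV m s}
    (h : blockIdx v = Sum.inr (Sum.inr ())) : ∃ x, v = Sum.inr (Sum.inr x) := by
  match v with
  | Sum.inl i => simp [blockIdx] at h
  | Sum.inr (Sum.inl p) => simp [blockIdx] at h
  | Sum.inr (Sum.inr x) => exact ⟨x, rfl⟩

lemma blockIdx_km {m s : ℕ} {i : Fin m} {v : FolkV m s}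
    (h : blockIdx v = Sum.inl i) : v = Sum.inl i := by
  match v with
  | Sum.inl j => simp only [blockIdx, Sum.inl.injEq] at h; rw [h]
  | Sum.inr (Sum.inl p) => simp [blockIdx] at h
  | Sum.inr (Sum.inr x) => simp [blockIdx] at h

/-! ### Clique bound -/

lemma folkGraph_cliqueFree (m s : ℕ) : (folkGraph m s).CliqueFree (m + 2 * s + 5) := by
  classical
  intro t ht
  have hcard : t.card = m + 2 * s + 5 := ht.2
  have hclique := ht.1
  have hsum := Finset.card_eq_sum_card_fiberwise
    (f := blockIdx) (s := t) (t := (Finset.univ : Finset (FolkB m s)))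
    (fun x _ => Finset.mem_univ _)
  have hbound : ∀ b : FolkB m s,
      (t.filter (fun v => blockIdx v = b)).card ≤
        Sum.elim (fun _ => 1) (Sum.elim (fun _ => 2) (fun _ => 4)) b := by
    rintro (i | a | ⟨⟩)
    · -- K_m block: at most one vertex
      simp only [Sum.elim_inl]
      rw [Finset.card_le_one]
      intro u hu v hv
      simp only [Finset.mem_filter] at hu hv
      rw [blockIdx_km hu.2, blockIdx_km hv.2]
    · -- C5 block
      simp only [Sum.elim_inr, Sum.elim_inl]
      set f := t.filter (fun v => blockIdx v = Sum.inr (Sum.inl a)) with hf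
      have hinj : Set.InjOn (fun v : FolkV m s =>
          match v with | Sum.inr (Sum.inl p) => p.2 | _ => (0 : ZMod 5)) f := by
        intro u hu v hv huv
        simp only [hf, Finset.coe_filter, Set.mem_setOf_eq] at hu hv
        obtain ⟨x, rfl⟩ := blockIdx_c5 hu.2
        obtain ⟨y, rfl⟩ := blockIdx_c5 hv.2
        simp only at huv
        rw [huv]
      have himg := Finset.card_image_of_injOn hinj
      rw [← himg]
      apply cAdj_clique
      intro x hx y hy hxy
      simp only [Finset.mem_image] at hx hy
      obtain ⟨u, hu, hux⟩ := hx
      obtain ⟨v, hv, hvy⟩ := hy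
      simp only [hf, Finset.mem_filter] at hu hv
      obtain ⟨x', rfl⟩ := blockIdx_c5 hu.2
      obtain ⟨y', rfl⟩ := blockIdx_c5 hv.2
      simp only at hux hvy
      rw [← hux, ← hvy]
      rw [← hux, ← hvy] at hxy
      have hne : (Sum.inr (Sum.inl (a, x')) : FolkV m s) ≠ Sum.inr (Sum.inl (a, y')) := by
        intro hh
        apply hxy
        simp only [Sum.inr.injEq, Sum.inl.injEq, Prod.mk.injEq] at hh
        exact hh.2
      have hadj := hclique hu.1 hv.1 hne
      rcases hadj with hb | hl
      · exact absurd (by rw [hu.2, hv.2]) hb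
      · exact hl
    · -- H block
      simp only [Sum.elim_inr]
      set f := t.filter (fun v => blockIdx v = Sum.inr (Sum.inr ())) with hf
      have hinj : Set.InjOn (fun v : FolkV m s =>
          match v with | Sum.inr (Sum.inr x) => x | _ => (0 : ZMod 13)) f := by
        intro u hu v hv huv
        simp only [hf, Finset.coe_filter, Set.mem_setOf_eq] at hu hv
        obtain ⟨x, rfl⟩ := blockIdx_h hu.2
        obtain ⟨y, rfl⟩ := blockIdx_h hv.2
        simp only at huv
        rw [huv]
      have himg := Finset.card_image_of_injOn hinj
      rw [← himg]
      apply hAdj_clique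
      intro x hx y hy hxy
      simp only [Finset.mem_image] at hx hy
      obtain ⟨u, hu, hux⟩ := hx
      obtain ⟨v, hv, hvy⟩ := hy
      simp only [hf, Finset.mem_filter] at hu hv
      obtain ⟨x', rfl⟩ := blockIdx_h hu.2
      obtain ⟨y', rfl⟩ := blockIdx_h hv.2
      simp only at hux hvy
      rw [← hux, ← hvy]
      rw [← hux, ← hvy] at hxy
      have hne : (Sum.inr (Sum.inr x') : FolkV m s) ≠ Sum.inr (Sum.inr y') := by
        intro hh
        apply hxy
        simp only [Sum.inr.injEq] at hh
        exact hh
      have hadj := hclique hu.1 hv.1 hne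
      rcases hadj with hb | hl
      · exact absurd (by rw [hu.2, hv.2]) hb
      · exact hl
  have htot : t.card ≤ ∑ b : FolkB m s,
      Sum.elim (fun _ => 1) (Sum.elim (fun _ => 2) (fun _ => 4)) b := by
    rw [hsum]
    exact Finset.sum_le_sum (fun b _ => hbound b)
  rw [hcard] at htot
  simp only [Fintype.sum_sum_type, Sum.elim_inl, Sum.elim_inr, Finset.sum_const,
    Finset.card_univ, Fintype.card_fin, smul_eq_mul, mul_one, Fintype.card_unit] at htot
  omega

/-! ### Coloring bound -/

lemma folkGraph_color_bound (m s N : ℕ) (c : (folkGraph m s).Coloring (Fin N)) :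
    m + 3 * s + 7 ≤ N := by
  classical
  set Col : FolkB m s → Finset (Fin N) :=
    fun b => (Finset.univ.filter (fun v => blockIdx v = b)).image c with hCol
  have hdisj : ∀ b ∈ (Finset.univ : Finset (FolkB m s)), ∀ b' ∈ Finset.univ,
      b ≠ b' → Disjoint (Col b) (Col b') := by
    intro b _ b' _ hbb'
    rw [Finset.disjoint_left]
    intro a ha ha'
    simp only [hCol, Finset.mem_image, Finset.mem_filter, Finset.mem_univ, true_and] at ha ha'
    obtain ⟨u, hu, hua⟩ := ha
    obtain ⟨v, hv, hva⟩ := ha'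
    have : (folkGraph m s).Adj u v := Or.inl (by rw [hu, hv]; exact hbb')
    exact c.valid this (hua.trans hva.symm)
  have hlow : ∀ b : FolkB m s,
      Sum.elim (fun _ => 1) (Sum.elim (fun _ => 3) (fun _ => 7)) b ≤ (Col b).card := by
    rintro (i | a | ⟨⟩)
    · simp only [Sum.elim_inl]
      rw [Nat.one_le_iff_ne_zero, ← Nat.pos_iff_ne_zero, Finset.card_pos]
      exact ⟨c (Sum.inl i), by
        simp only [hCol, Finset.mem_image, Finset.mem_filter, Finset.mem_univ, true_and]
        exact ⟨Sum.inl i, rfl, rfl⟩⟩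
    · simp only [Sum.elim_inr, Sum.elim_inl]
      have hsub : Finset.univ.image (fun x : ZMod 5 => c (Sum.inr (Sum.inl (a, x))))
          ⊆ Col (Sum.inr (Sum.inl a)) := by
        intro y hy
        simp only [Finset.mem_image, Finset.mem_univ, true_and] at hy
        obtain ⟨x, hx⟩ := hy
        simp only [hCol, Finset.mem_image, Finset.mem_filter, Finset.mem_univ, true_and]
        exact ⟨Sum.inr (Sum.inl (a, x)), rfl, hx⟩
      refine le_trans ?_ (Finset.card_le_card hsub)
      apply c5_colors
      intro x
      apply c.valid
      exact Or.inr (cAdj_succ x)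
    · simp only [Sum.elim_inr]
      have hsub : Finset.univ.image (fun x : ZMod 13 => c (Sum.inr (Sum.inr x)))
          ⊆ Col (Sum.inr (Sum.inr ())) := by
        intro y hy
        simp only [Finset.mem_image, Finset.mem_univ, true_and] at hy
        obtain ⟨x, hx⟩ := hy
        simp only [hCol, Finset.mem_image, Finset.mem_filter, Finset.mem_univ, true_and]
        exact ⟨Sum.inr (Sum.inr x), rfl, hx⟩
      refine le_trans ?_ (Finset.card_le_card hsub)
      apply h_colors
      intro x y hxy
      apply c.valid
      exact Or.inr hxy
  have hbu := Finset.card_biUnion hdisj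
  have hle : (Finset.univ.biUnion Col).card ≤ N := by
    have := Finset.card_le_univ (Finset.univ.biUnion Col)
    simpa using this
  have hsum : ∑ b : FolkB m s,
      Sum.elim (fun _ => 1) (Sum.elim (fun _ => 3) (fun _ => 7)) b
      ≤ ∑ b : FolkB m s, (Col b).card :=
    Finset.sum_le_sum (fun b _ => hlow b)
  have hval : (∑ b : FolkB m s,
      Sum.elim (fun _ => 1) (Sum.elim (fun _ => 3) (fun _ => 7)) b) = m + 3 * s + 7 := by
    simp only [Fintype.sum_sum_type, Sum.elim_inl, Sum.elim_inr, Finset.sum_const,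
      Finset.card_univ, Fintype.card_fin, smul_eq_mul, mul_one, Fintype.card_unit]
    omega
  rw [hval] at hsum
  rw [← hbu] at hsum
  exact hsum.trans hle

lemma folkGraph_not_colorable (m s : ℕ) : ¬ (folkGraph m s).Colorable (m + 3 * s + 6) := by
  rintro ⟨c⟩
  have := folkGraph_color_bound m s (m + 3 * s + 6) c
  omega

theorem stmt_5 (r s : ℕ) (h : 3 * s + 6 ≤ r) :
    (∃ G : SimpleGraph (Fin (r + 2 * s + 7)),
        G.CliqueFree (r - s - 1) ∧ (r + 1 : ℕ∞) ≤ G.chromaticNumber) ∧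
    folkman r (r - s - 1) ≤ r + 2 * s + 7 := by
  classical
  set m := r - 3 * s - 6 with hm
  have hm1 : m + 3 * s + 6 = r := by omega
  have hq : r - s - 1 = m + 2 * s + 5 := by omega
  have hcard : Fintype.card (FolkV m s) = r + 2 * s + 7 := by
    simp only [Fintype.card_sum, Fintype.card_prod, Fintype.card_fin, ZMod.card]
    omega
  have e : FolkV m s ≃ Fin (r + 2 * s + 7) := Fintype.equivFinOfCardEq hcard
  set G : SimpleGraph (Fin (r + 2 * s + 7)) :=
    (folkGraph m s).comap e.symm with hG
  have hclfree : G.CliqueFree (r - s - 1) := by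
    rw [hq]
    have hiso : G ≃g folkGraph m s := SimpleGraph.Iso.comap e.symm (folkGraph m s)
    exact (folkGraph_cliqueFree m s).comap hiso.toEmbedding.isContained
  have hchrom : (r + 1 : ℕ∞) ≤ G.chromaticNumber := by
    have hncol : ¬ G.Colorable r := by
      rintro ⟨c⟩
      apply folkGraph_not_colorable m s
      rw [hm1]
      refine ⟨⟨fun v => c (e v), ?_⟩⟩
      intro u v huv
      have : G.Adj (e u) (e v) := by
        simp only [hG, SimpleGraph.comap_adj, Equiv.symm_apply_apply]
        exact huv
      exact c.valid this
    have : ¬ G.chromaticNumber ≤ (r : ℕ∞) := fun hle =>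
      hncol (SimpleGraph.chromaticNumber_le_iff_colorable.mp hle)
    have hlt : (r : ℕ∞) < G.chromaticNumber := lt_of_not_ge this
    exact Order.add_one_le_of_lt hlt
  refine ⟨⟨G, hclfree, hchrom⟩, ?_⟩
  apply Nat.sInf_le
  exact ⟨G, hclfree, hchrom⟩
end

section
/- Let G be a finite simple graph and set f(G) = χ(G) − ω(G). If f(G) ≤ 3, then the number of vertices of G satisfies |V(G)| ≥ χ(G) + 2·f(G). -/
open SimpleGraph Finset

set_option linter.unusedSectionVars false

namespace GapProof

variable {V : Type*} [Fintype V] [DecidableEq V]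

/-- disjointness of two pairs -/
def Dp (p q : V × V) : Prop := p.1 ≠ q.1 ∧ p.1 ≠ q.2 ∧ p.2 ≠ q.1 ∧ p.2 ≠ q.2

lemma Dp_symm : Symmetric (Dp (V := V)) := by
  rintro p q ⟨h1, h2, h3, h4⟩
  exact ⟨h1.symm, h3.symm, h2.symm, h4.symm⟩

/-- a valid "matching" in `H` (list of pairwise disjoint edges of `H`). -/
def ValidM (H : SimpleGraph V) (L : List (V × V)) : Prop :=
  (∀ p ∈ L, H.Adj p.1 p.2) ∧ L.Pairwise Dp

lemma ValidM.adj {H : SimpleGraph V} {L : List (V × V)} (h : ValidM H L)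
    {p : V × V} (hp : p ∈ L) : H.Adj p.1 p.2 := h.1 p hp

lemma ValidM.dp {H : SimpleGraph V} {L : List (V × V)} (h : ValidM H L)
    {p q : V × V} (hp : p ∈ L) (hq : q ∈ L) (hne : p ≠ q) : Dp p q :=
  by haveI : Std.Symm (Dp (V := V)) := ⟨fun a b h => Dp_symm h⟩; exact h.2.forall hp hq hne

/-- list of all endpoints -/
def vlist (L : List (V × V)) : List V := L.flatMap (fun p => [p.1, p.2])

lemma mem_vlist {L : List (V × V)} {v : V} :
    v ∈ vlist L ↔ ∃ p ∈ L, v = p.1 ∨ v = p.2 := by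
  simp [vlist]

lemma vlist_length (L : List (V × V)) : (vlist L).length = 2 * L.length := by
  induction L with
  | nil => simp [vlist]
  | cons p t ih => simp [vlist] at ih ⊢; omega

lemma vlist_nodup {H : SimpleGraph V} {L : List (V × V)} (h : ValidM H L) :
    (vlist L).Nodup := by
  induction L with
  | nil => simp [vlist]
  | cons p t ih =>
    have hV : ValidM H t := ⟨fun q hq => h.1 q (List.mem_cons_of_mem _ hq), h.2.of_cons⟩
    have hne : p.1 ≠ p.2 := (h.adj (List.mem_cons_self)).ne
    have hd : ∀ q ∈ t, Dp p q := by
      intro q hq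
      exact List.rel_of_pairwise_cons h.2 hq
    simp only [vlist, List.flatMap_cons, List.nodup_append]
    refine ⟨by simp [hne], ih hV, ?_⟩
    intro a ha
    simp only [List.mem_cons, List.not_mem_nil, or_false] at ha
    intro b hmem
    rw [show t.flatMap (fun p => [p.1, p.2]) = vlist t from rfl, mem_vlist] at hmem
    obtain ⟨q, hq, hq2⟩ := hmem
    have := hd q hq
    obtain ⟨d1, d2, d3, d4⟩ := this
    intro hab
    subst hab
    rcases ha with rfl | rfl <;> rcases hq2 with h5 | h5 <;>
      first
        | exact d1 h5 | exact d2 h5 | exact d3 h5 | exact d4 h5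

/-- support finset -/
def suppF (L : List (V × V)) : Finset V := (vlist L).toFinset

lemma mem_suppF {L : List (V × V)} {v : V} :
    v ∈ suppF L ↔ ∃ p ∈ L, v = p.1 ∨ v = p.2 := by
  simp [suppF, mem_vlist]

lemma suppF_card {H : SimpleGraph V} {L : List (V × V)} (h : ValidM H L) :
    (suppF L).card = 2 * L.length := by
  rw [suppF, List.toFinset_card_of_nodup (vlist_nodup h), vlist_length]

/-- unmatched vertices -/
def US (L : List (V × V)) : Finset V := Finset.univ \ suppF L

lemma mem_US {L : List (V × V)} {v : V} :
    v ∈ US L ↔ ∀ p ∈ L, v ≠ p.1 ∧ v ≠ p.2 := by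
  simp only [US, mem_sdiff, mem_univ, true_and, mem_suppF]
  push_neg
  constructor <;> (intro h p hp; exact ⟨(h p hp).1, (h p hp).2⟩)

lemma US_card {H : SimpleGraph V} {L : List (V × V)} (h : ValidM H L) :
    (US L).card = Fintype.card V - 2 * L.length := by
  rw [US, card_sdiff_of_subset (subset_univ _), card_univ, suppF_card h]

lemma two_mul_length_le {H : SimpleGraph V} {L : List (V × V)} (h : ValidM H L) :
    2 * L.length ≤ Fintype.card V := by
  rw [← vlist_length]
  exact (vlist_nodup h).length_le_card

/-- triangle-free helper -/
lemma tri3 {H : SimpleGraph V} (hH : H.CliqueFree 3) {x y z : V}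
    (h1 : H.Adj x y) (h2 : H.Adj x z) (h3 : H.Adj y z) : False :=
  hH {x, y, z} (is3Clique_triple_iff.2 ⟨h1, h2, h3⟩)

section Er
variable {H : SimpleGraph V} {L : List (V × V)} {a b a' b' : V}

lemma Dp_symm' : Symmetric (Dp (V := V)) := by
  rintro p q ⟨h1, h2, h3, h4⟩
  exact ⟨h1.symm, h3.symm, h2.symm, h4.symm⟩

lemma ValidM.adj' {p : V × V} (h : ValidM H L) (hp : p ∈ L) : H.Adj p.1 p.2 := h.1 p hp

lemma ValidM.dp' {p q : V × V} (h : ValidM H L) (hp : p ∈ L) (hq : q ∈ L) (hne : p ≠ q) :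
    Dp p q := by
    haveI : Std.Symm (Dp (V := V)) := ⟨fun a b h => Dp_symm' h⟩; exact h.2.forall hp hq hne

lemma ValidM.nodup (h : ValidM H L) : L.Nodup :=
  h.2.imp (fun {p q} hd => by rintro rfl; exact hd.1 rfl)

/-- both-orientations membership -/
def mem2 (a b : V) (L : List (V × V)) : Prop := (a, b) ∈ L ∨ (b, a) ∈ L

lemma mem2.symm (h : mem2 a b L) : mem2 b a L := h.elim Or.inr Or.inl

lemma mem2.adj (hL : ValidM H L) (h : mem2 a b L) : H.Adj a b := by
  rcases h with h | h
  · exact hL.adj' h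
  · exact (hL.adj' h).symm

/-- erase an unordered pair -/
def er (L : List (V × V)) (a b : V) : List (V × V) := (L.erase (a, b)).erase (b, a)

lemma er_sublist : List.Sublist (er L a b) L :=
  (List.erase_sublist (l := L.erase (a, b)) (a := (b, a))).trans (List.erase_sublist (l := L) (a := (a, b)))

lemma er_subset {q : V × V} (h : q ∈ er L a b) : q ∈ L :=
  (er_sublist (a := a) (b := b)).subset h

lemma er_valid (hL : ValidM H L) : ValidM H (er L a b) :=
  ⟨fun q hq => hL.adj' (er_subset hq), hL.2.sublist er_sublist⟩

lemma er_mem_iff (hL : ValidM H L) {q : V × V} :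
    q ∈ er L a b ↔ q ∈ L ∧ q ≠ (a, b) ∧ q ≠ (b, a) := by
  have h1 := (hL.nodup.erase (a,b)).mem_erase_iff (a := q) (b := (b,a))
  have h2 := hL.nodup.mem_erase_iff (a := q) (b := (a,b))
  rw [er, h1, h2]
  tauto

lemma er_length (hL : ValidM H L) (h : mem2 a b L) :
    (er L a b).length + 1 = L.length := by
  have hne : a ≠ b := (h.adj hL).ne
  have hboth : ¬((a, b) ∈ L ∧ (b, a) ∈ L) := by
    rintro ⟨h1, h2⟩
    have := hL.dp' h1 h2 (by simp [Prod.ext_iff]; intro h'; exact fun _ => hne h')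
    exact this.2.1 rfl
  rcases h with h | h
  · have hpos := List.length_pos_of_mem h
    have hnm : (b, a) ∉ L.erase (a, b) := fun hm => hboth ⟨h, (List.erase_sublist (l := L)).subset hm⟩
    rw [er, List.erase_of_not_mem hnm, List.length_erase_of_mem h]
    omega
  · have hpos := List.length_pos_of_mem h
    have hnm : (a, b) ∉ L := fun hm => hboth ⟨hm, h⟩
    rw [er, List.erase_of_not_mem hnm, List.length_erase_of_mem h]
    omega

lemma er_mem_of (hL : ValidM H L) {q : V × V} (hq : q ∈ L) (h1 : q ≠ (a, b))
    (h2 : q ≠ (b, a)) : q ∈ er L a b := (er_mem_iff hL).2 ⟨hq, h1, h2⟩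

/-- a vertex of an erased pair is disjoint from all remaining pairs -/
lemma er_dp (hL : ValidM H L) (h : mem2 a b L) {q : V × V} (hq : q ∈ er L a b) :
    a ≠ q.1 ∧ a ≠ q.2 ∧ b ≠ q.1 ∧ b ≠ q.2 := by
  obtain ⟨hqL, hq1, hq2⟩ := (er_mem_iff hL).1 hq
  rcases h with h | h
  · exact hL.dp' h hqL (fun he => hq1 he.symm)
  · have := hL.dp' h hqL (fun he => hq2 he.symm)
    exact ⟨this.2.2.1, this.2.2.2, this.1, this.2.1⟩

end Er

section Aug
variable {H : SimpleGraph V} {L : List (V × V)} {a b a' b' u u' : V}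

lemma US_ne_supp (hu : u ∈ US L) (hv : v ∈ suppF L) : u ≠ v := by
  rintro rfl
  rw [mem_US] at hu
  rw [mem_suppF] at hv
  obtain ⟨p, hp, h⟩ := hv
  rcases h with h | h
  · exact (hu p hp).1 h
  · exact (hu p hp).2 h

lemma mem2.supp_left (h : mem2 a b L) : a ∈ suppF L := by
  rw [mem_suppF]
  rcases h with h | h
  · exact ⟨_, h, Or.inl rfl⟩
  · exact ⟨_, h, Or.inr rfl⟩

lemma mem2.supp_right (h : mem2 a b L) : b ∈ suppF L := h.symm.supp_left

lemma US_ne_of_mem {p : V × V} (hu : u ∈ US L) (hp : p ∈ L) : u ≠ p.1 ∧ u ≠ p.2 :=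
  (mem_US.1 hu) p hp

/-- augment: an edge between two unmatched vertices -/
lemma aug1 (hL : ValidM H L) (hmax : ∀ L', ValidM H L' → L'.length ≤ L.length)
    (hu : u ∈ US L) (hu' : u' ∈ US L) (hadj : H.Adj u u') : False := by
  have hv : ValidM H ((u, u') :: L) := by
    constructor
    · intro p hp
      rcases List.mem_cons.1 hp with rfl | hp
      · exact hadj
      · exact hL.adj' hp
    · rw [List.pairwise_cons]
      refine ⟨fun q hq => ?_, hL.2⟩
      obtain ⟨h1, h2⟩ := US_ne_of_mem hu hq
      obtain ⟨h3, h4⟩ := US_ne_of_mem hu' hq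
      exact ⟨h1, h2, h3, h4⟩
  have := hmax _ hv
  simp at this

/-- augment: replace one matching edge by two -/
lemma aug2 (hL : ValidM H L) (hmax : ∀ L', ValidM H L' → L'.length ≤ L.length)
    (hab : mem2 a b L) (hu : u ∈ US L) (hu' : u' ∈ US L) (hne : u ≠ u')
    (h1 : H.Adj u a) (h2 : H.Adj u' b) : False := by
  have hUs := fun (v : V) (hv : v ∈ suppF L) => US_ne_supp hu hv
  have hUs' := fun (v : V) (hv : v ∈ suppF L) => US_ne_supp hu' hv
  have hadp := fun {q : V × V} (hq : q ∈ er L a b) => er_dp hL hab hq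
  have hv : ValidM H ((u, a) :: (u', b) :: er L a b) := by
    constructor
    · intro p hp
      rcases List.mem_cons.1 hp with rfl | hp
      · exact h1
      rcases List.mem_cons.1 hp with rfl | hp
      · exact h2
      · exact hL.adj' (er_subset hp)
    · rw [List.pairwise_cons, List.pairwise_cons]
      refine ⟨?_, ?_, (er_valid hL).2⟩
      · intro q hq
        rcases List.mem_cons.1 hq with rfl | hq
        · exact ⟨hne, hUs _ hab.supp_right, fun h => hUs' _ hab.supp_left h.symm,
            (hab.adj hL).ne⟩
        · obtain ⟨d1, d2, d3, d4⟩ := hadp hq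
          have := US_ne_of_mem hu (er_subset hq)
          exact ⟨this.1, this.2, d1, d2⟩
      · intro q hq
        obtain ⟨d1, d2, d3, d4⟩ := hadp hq
        have := US_ne_of_mem hu' (er_subset hq)
        exact ⟨this.1, this.2, d3, d4⟩
  have hlen := hmax _ hv
  have := er_length hL hab
  simp only [List.length_cons] at hlen
  omega

/-- augment: replace two matching edges by three -/
lemma aug3 (hL : ValidM H L) (hmax : ∀ L', ValidM H L' → L'.length ≤ L.length)
    (hab : mem2 a b L) (hab' : mem2 a' b' L)
    (hd : a ≠ a' ∧ a ≠ b' ∧ b ≠ a' ∧ b ≠ b')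
    (hu : u ∈ US L) (hu' : u' ∈ US L) (hne : u ≠ u')
    (h1 : H.Adj u a) (h2 : H.Adj b b') (h3 : H.Adj a' u') : False := by
  obtain ⟨d1, d2, d3, d4⟩ := hd
  have hE : ValidM H (er L a b) := er_valid hL
  have hab'2 : mem2 a' b' (er L a b) := by
    rcases hab' with h | h
    · exact Or.inl (er_mem_of hL h
        (by simp [Prod.ext_iff]; intro h'; exact absurd h'.symm d1)
        (by simp [Prod.ext_iff]; intro h'; exact absurd h'.symm d3))
    · exact Or.inr (er_mem_of hL h
        (by simp [Prod.ext_iff]; intro h'; exact absurd h'.symm d2)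
        (by simp [Prod.ext_iff]; intro h'; exact absurd h'.symm d4))
  set L2 := er (er L a b) a' b' with hL2
  have hUs := fun (v : V) (hv : v ∈ suppF L) => US_ne_supp hu hv
  have hUs' := fun (v : V) (hv : v ∈ suppF L) => US_ne_supp hu' hv
  have hdq : ∀ q ∈ L2, (a ≠ q.1 ∧ a ≠ q.2 ∧ b ≠ q.1 ∧ b ≠ q.2) ∧
      (a' ≠ q.1 ∧ a' ≠ q.2 ∧ b' ≠ q.1 ∧ b' ≠ q.2) ∧ q ∈ L := by
    intro q hq
    have hq1 : q ∈ er L a b := er_subset hq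
    exact ⟨er_dp hL hab hq1, er_dp hE hab'2 hq, er_subset hq1⟩
  have hv : ValidM H ((u, a) :: (b, b') :: (a', u') :: L2) := by
    constructor
    · intro p hp
      rcases List.mem_cons.1 hp with rfl | hp
      · exact h1
      rcases List.mem_cons.1 hp with rfl | hp
      · exact h2
      rcases List.mem_cons.1 hp with rfl | hp
      · exact h3
      · exact hL.adj' (hdq _ hp).2.2
    · rw [List.pairwise_cons, List.pairwise_cons, List.pairwise_cons]
      have hbne : a ≠ b := (hab.adj hL).ne
      have hbne' : a' ≠ b' := (hab'.adj hL).ne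
      refine ⟨?_, ?_, ?_, hE.2.sublist er_sublist⟩
      · intro q hq
        rcases List.mem_cons.1 hq with rfl | hq
        · exact ⟨hUs _ hab.supp_right, hUs _ hab'.supp_right, hbne, d2⟩
        rcases List.mem_cons.1 hq with rfl | hq
        · exact ⟨hUs _ hab'.supp_left, hne, d1,
            fun h => hUs' _ hab.supp_left h.symm⟩
        · obtain ⟨⟨e1, e2, _, _⟩, _, hqL⟩ := hdq _ hq
          have := US_ne_of_mem hu hqL
          exact ⟨this.1, this.2, e1, e2⟩
      · intro q hq
        rcases List.mem_cons.1 hq with rfl | hq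
        · exact ⟨d3, fun h => hUs' _ hab.supp_right h.symm, hbne'.symm,
            fun h => hUs' _ hab'.supp_right h.symm⟩
        · obtain ⟨⟨_, _, e3, e4⟩, ⟨_, _, e7, e8⟩, hqL⟩ := hdq _ hq
          exact ⟨e3, e4, e7, e8⟩
      · intro q hq
        obtain ⟨_, ⟨e5, e6, _, _⟩, hqL⟩ := hdq _ hq
        have := US_ne_of_mem hu' hqL
        exact ⟨e5, e6, this.1, this.2⟩
  have hlen := hmax _ hv
  have l1 := er_length hL hab
  have l2 := er_length hE hab'2
  rw [← hL2] at l2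
  simp only [List.length_cons] at hlen
  omega

end Aug


section Clean
variable {H : SimpleGraph V} {L : List (V × V)} {a b : V}

/-- independence of a finset -/
def IndepOn (H : SimpleGraph V) (s : Finset V) : Prop :=
  ∀ x ∈ s, ∀ y ∈ s, x ≠ y → ¬H.Adj x y

/-- adjacent to no unmatched vertex -/
def clean (H : SimpleGraph V) (L : List (V × V)) (x : V) : Prop :=
  ∀ u ∈ US L, ¬H.Adj u x

lemma US_indep (hL : ValidM H L) (hmax : ∀ L', ValidM H L' → L'.length ≤ L.length) :
    IndepOn H (US L) := fun _ hx _ hy _ hadj => aug1 hL hmax hx hy hadj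

lemma tri3' {H : SimpleGraph V} (hH : H.CliqueFree 3) {x y z : V}
    (h1 : H.Adj x y) (h2 : H.Adj x z) (h3 : H.Adj y z) : False :=
  hH {x, y, z} (is3Clique_triple_iff.2 ⟨h1, h2, h3⟩)

lemma exists_clean (hH : H.CliqueFree 3) (hL : ValidM H L)
    (hmax : ∀ L', ValidM H L' → L'.length ≤ L.length) (hab : mem2 a b L) :
    clean H L a ∨ clean H L b := by
  by_contra hc
  push_neg at hc
  obtain ⟨hc1, hc2⟩ := hc
  simp only [clean, not_forall] at hc1 hc2
  obtain ⟨u, hu, hua⟩ := hc1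
  obtain ⟨u', hu', hub⟩ := hc2
  rw [not_not] at hua hub
  rcases eq_or_ne u u' with rfl | hne
  · exact tri3' hH hua hub (hab.adj hL)
  · exact aug2 hL hmax hab hu hu' hne hua hub

lemma clean_of_mem (hH : H.CliqueFree 3) (hL : ValidM H L)
    (hmax : ∀ L', ValidM H L' → L'.length ≤ L.length) {p : V × V} (hp : p ∈ L) :
    ∃ x, (x = p.1 ∨ x = p.2) ∧ clean H L x ∧ x ∈ suppF L := by
  have hm : mem2 p.1 p.2 L := Or.inl (by simpa using hp)
  rcases exists_clean hH hL hmax hm with h | h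
  · exact ⟨p.1, Or.inl rfl, h, hm.supp_left⟩
  · exact ⟨p.2, Or.inr rfl, h, hm.supp_right⟩

lemma dp_ne {p q : V × V} (h : Dp p q) {v w : V} (hv : v = p.1 ∨ v = p.2)
    (hw : w = q.1 ∨ w = q.2) : v ≠ w := by
  obtain ⟨d1, d2, d3, d4⟩ := h
  rcases hv with rfl | rfl <;> rcases hw with rfl | rfl <;> assumption

/-- glue the unmatched vertices with a clean independent pick set -/
lemma build (hL : ValidM H L) (hmax : ∀ L', ValidM H L' → L'.length ≤ L.length)
    (P : Finset V) (hPs : P ⊆ suppF L) (hPi : IndepOn H P)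
    (hPc : ∀ x ∈ P, clean H L x) :
    ∃ s : Finset V, IndepOn H s ∧ s.card = (Fintype.card V - 2 * L.length) + P.card := by
  have hdisj : Disjoint (US L) P := by
    rw [Finset.disjoint_left]
    intro x hx hxP
    exact US_ne_supp hx (hPs hxP) rfl
  refine ⟨US L ∪ P, ?_, ?_⟩
  · intro x hx y hy hne hadj
    rcases mem_union.1 hx with hx | hx <;> rcases mem_union.1 hy with hy | hy
    · exact US_indep hL hmax x hx y hy hne hadj
    · exact hPc y hy x hx hadj
    · exact hPc x hx y hy hadj.symm
    · exact hPi x hx y hy hne hadj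
  · rw [card_union_of_disjoint hdisj, US_card hL]

lemma pick1 (hH : H.CliqueFree 3) (hL : ValidM H L)
    (hmax : ∀ L', ValidM H L' → L'.length ≤ L.length) (hlen : 1 ≤ L.length) :
    ∃ x, x ∈ suppF L ∧ clean H L x := by
  obtain ⟨p, t, rfl⟩ : ∃ p t, L = p :: t := by
    cases L with
    | nil => simp at hlen
    | cons p t => exact ⟨p, t, rfl⟩
  obtain ⟨x, _, hc, hs⟩ := clean_of_mem hH hL hmax List.mem_cons_self
  exact ⟨x, hs, hc⟩

lemma pick2 (hH : H.CliqueFree 3) (hL : ValidM H L)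
    (hmax : ∀ L', ValidM H L' → L'.length ≤ L.length) (hlen : 3 ≤ L.length) :
    ∃ x y, x ∈ suppF L ∧ clean H L x ∧ y ∈ suppF L ∧ clean H L y ∧ x ≠ y ∧ ¬H.Adj x y := by
  obtain ⟨p, q, r, t, rfl⟩ : ∃ p q r t, L = p :: q :: r :: t := by
    match L with
    | p :: q :: r :: t => exact ⟨p, q, r, t, rfl⟩
    | [] => simp at hlen
    | [p] => simp at hlen
    | [p, q] => simp at hlen
  have hp : p ∈ p :: q :: r :: t := List.mem_cons_self
  have hq : q ∈ p :: q :: r :: t := by simp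
  have hr : r ∈ p :: q :: r :: t := by simp
  have dpq : Dp p q := List.rel_of_pairwise_cons hL.2 (by simp)
  have dpr : Dp p r := List.rel_of_pairwise_cons hL.2 (by simp)
  have dqr : Dp q r := List.rel_of_pairwise_cons hL.2.of_cons (by simp)
  obtain ⟨x, hx, hxc, hxs⟩ := clean_of_mem hH hL hmax hp
  obtain ⟨y, hy, hyc, hys⟩ := clean_of_mem hH hL hmax hq
  obtain ⟨z, hz, hzc, hzs⟩ := clean_of_mem hH hL hmax hr
  by_cases hxy : H.Adj x y
  · by_cases hxz : H.Adj x z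
    · by_cases hyz : H.Adj y z
      · exact absurd (tri3' hH hxy hxz hyz) (by simp)
      · exact ⟨y, z, hys, hyc, hzs, hzc, dp_ne dqr hy hz, hyz⟩
    · exact ⟨x, z, hxs, hxc, hzs, hzc, dp_ne dpr hx hz, hxz⟩
  · exact ⟨x, y, hxs, hxc, hys, hyc, dp_ne dpq hx hy, hxy⟩

end Clean



section BoolLemmas

lemma bnot3 {p q r : Prop} [Decidable p] [Decidable q] [Decidable r] (h : ¬(p ∧ q ∧ r)) :
    (!(decide p && decide q && decide r)) = true := by
  simp only [Bool.not_eq_true', Bool.and_eq_false_iff, decide_eq_false_iff_not]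
  tauto

lemma bor3 {p q r : Prop} [Decidable p] [Decidable q] [Decidable r] (h : ¬(¬p ∧ ¬q ∧ ¬r)) :
    (decide p || decide q || decide r) = true := by
  simp only [Bool.or_eq_true, decide_eq_true_iff]
  tauto

lemma bneg3 {p q r : Prop} [Decidable p] [Decidable q] [Decidable r]
    (h : ((!decide p) && (!decide q) && (!decide r)) = true) : ¬p ∧ ¬q ∧ ¬r := by
  simp only [Bool.and_eq_true, Bool.not_eq_true', decide_eq_false_iff_not] at h
  exact ⟨h.1.1, h.1.2, h.2⟩

set_option maxHeartbeats 12000000 in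
lemma r33Bool : ∀ (e01 e02 e03 e04 e05 e12 e13 e14 e15 e23 e24 e25 e34 e35 e45 : Bool),
    ((!(e01 && e02 && e12)) && ((!(e01 && e03 && e13)) && ((!(e01 && e04 && e14)) && ((!(e01 && e05 && e15)) && ((!(e02 && e03 && e23)) && ((!(e02 && e04 && e24)) && ((!(e02 && e05 && e25)) && ((!(e03 && e04 && e34)) && ((!(e03 && e05 && e35)) && ((!(e04 && e05 && e45)) && ((!(e12 && e13 && e23)) && ((!(e12 && e14 && e24)) && ((!(e12 && e15 && e25)) && ((!(e13 && e14 && e34)) && ((!(e13 && e15 && e35)) && ((!(e14 && e15 && e45)) && ((!(e23 && e24 && e34)) && ((!(e23 && e25 && e35)) && ((!(e24 && e25 && e45)) && (!(e34 && e35 && e45))))))))))))))))))))) = true →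
    (((!e01) && (!e02) && (!e12)) || (((!e01) && (!e03) && (!e13)) || (((!e01) && (!e04) && (!e14)) || (((!e01) && (!e05) && (!e15)) || (((!e02) && (!e03) && (!e23)) || (((!e02) && (!e04) && (!e24)) || (((!e02) && (!e05) && (!e25)) || (((!e03) && (!e04) && (!e34)) || (((!e03) && (!e05) && (!e35)) || (((!e04) && (!e05) && (!e45)) || (((!e12) && (!e13) && (!e23)) || (((!e12) && (!e14) && (!e24)) || (((!e12) && (!e15) && (!e25)) || (((!e13) && (!e14) && (!e34)) || (((!e13) && (!e15) && (!e35)) || (((!e14) && (!e15) && (!e45)) || (((!e23) && (!e24) && (!e34)) || (((!e23) && (!e25) && (!e35)) || (((!e24) && (!e25) && (!e45)) || ((!e34) && (!e35) && (!e45))))))))))))))))))))) = true := by decide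

lemma r33P (p01 p02 p03 p04 p05 p12 p13 p14 p15 p23 p24 p25 p34 p35 p45 : Prop)
    (h012 : ¬(p01 ∧ p02 ∧ p12)) (h013 : ¬(p01 ∧ p03 ∧ p13)) (h014 : ¬(p01 ∧ p04 ∧ p14)) (h015 : ¬(p01 ∧ p05 ∧ p15)) (h023 : ¬(p02 ∧ p03 ∧ p23)) (h024 : ¬(p02 ∧ p04 ∧ p24)) (h025 : ¬(p02 ∧ p05 ∧ p25)) (h034 : ¬(p03 ∧ p04 ∧ p34)) (h035 : ¬(p03 ∧ p05 ∧ p35)) (h045 : ¬(p04 ∧ p05 ∧ p45)) (h123 : ¬(p12 ∧ p13 ∧ p23)) (h124 : ¬(p12 ∧ p14 ∧ p24)) (h125 : ¬(p12 ∧ p15 ∧ p25)) (h134 : ¬(p13 ∧ p14 ∧ p34)) (h135 : ¬(p13 ∧ p15 ∧ p35)) (h145 : ¬(p14 ∧ p15 ∧ p45)) (h234 : ¬(p23 ∧ p24 ∧ p34)) (h235 : ¬(p23 ∧ p25 ∧ p35)) (h245 : ¬(p24 ∧ p25 ∧ p45)) (h345 : ¬(p34 ∧ p35 ∧ p45)) 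:
    (¬p01 ∧ ¬p02 ∧ ¬p12) ∨ (¬p01 ∧ ¬p03 ∧ ¬p13) ∨ (¬p01 ∧ ¬p04 ∧ ¬p14) ∨ (¬p01 ∧ ¬p05 ∧ ¬p15) ∨ (¬p02 ∧ ¬p03 ∧ ¬p23) ∨ (¬p02 ∧ ¬p04 ∧ ¬p24) ∨ (¬p02 ∧ ¬p05 ∧ ¬p25) ∨ (¬p03 ∧ ¬p04 ∧ ¬p34) ∨ (¬p03 ∧ ¬p05 ∧ ¬p35) ∨ (¬p04 ∧ ¬p05 ∧ ¬p45) ∨ (¬p12 ∧ ¬p13 ∧ ¬p23) ∨ (¬p12 ∧ ¬p14 ∧ ¬p24) ∨ (¬p12 ∧ ¬p15 ∧ ¬p25) ∨ (¬p13 ∧ ¬p14 ∧ ¬p34) ∨ (¬p13 ∧ ¬p15 ∧ ¬p35) ∨ (¬p14 ∧ ¬p15 ∧ ¬p45) ∨ (¬p23 ∧ ¬p24 ∧ ¬p34) ∨ (¬p23 ∧ ¬p25 ∧ ¬p35) ∨ (¬p24 ∧ ¬p25 ∧ ¬p45) ∨ (¬p34 ∧ ¬p35 ∧ ¬p45) :=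 by
  classical
  have key := r33Bool (decide p01) (decide p02) (decide p03) (decide p04) (decide p05) (decide p12) (decide p13) (decide p14) (decide p15) (decide p23) (decide p24) (decide p25) (decide p34) (decide p35) (decide p45)
    ((iff_of_eq (Bool.and_eq_true _ _)).mpr ⟨bnot3 h012, (iff_of_eq (Bool.and_eq_true _ _)).mpr ⟨bnot3 h013, (iff_of_eq (Bool.and_eq_true _ _)).mpr ⟨bnot3 h014, (iff_of_eq (Bool.and_eq_true _ _)).mpr ⟨bnot3 h015, (iff_of_eq (Bool.and_eq_true _ _)).mpr ⟨bnot3 h023, (iff_of_eq (Bool.and_eq_true _ _)).mpr ⟨bnot3 h024, (iff_of_eq (Bool.and_eq_true _ _)).mpr ⟨bnot3 h025, (iff_of_eq (Bool.and_eq_true _ _)).mpr ⟨bnot3 h034, (iff_of_eq (Bool.and_eq_true _ _)).mpr ⟨bnot3 h035, (iff_of_eq (Bool.and_eq_true _ _)).mpr ⟨bnot3 h045, (iff_of_eq (Bool.and_eq_true _ _)).mpr ⟨bnot3 h123, (iff_of_eq (Bool.and_eq_true _ _)).mpr ⟨bnot3 h124, (iff_of_eq (Bool.and_eq_true _ _)).mpr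 ⟨bnot3 h125, (iff_of_eq (Bool.and_eq_true _ _)).mpr ⟨bnot3 h134, (iff_of_eq (Bool.and_eq_true _ _)).mpr ⟨bnot3 h135, (iff_of_eq (Bool.and_eq_true _ _)).mpr ⟨bnot3 h145, (iff_of_eq (Bool.and_eq_true _ _)).mpr ⟨bnot3 h234, (iff_of_eq (Bool.and_eq_true _ _)).mpr ⟨bnot3 h235, (iff_of_eq (Bool.and_eq_true _ _)).mpr ⟨bnot3 h245, bnot3 h345⟩⟩⟩⟩⟩⟩⟩⟩⟩⟩⟩⟩⟩⟩⟩⟩⟩⟩⟩)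
  rcases (iff_of_eq (Bool.or_eq_true _ _)).mp key with h | key
  · exact Or.inl (bneg3 h)
  rcases (iff_of_eq (Bool.or_eq_true _ _)).mp key with h | key
  · exact Or.inr (Or.inl (bneg3 h))
  rcases (iff_of_eq (Bool.or_eq_true _ _)).mp key with h | key
  · exact Or.inr (Or.inr (Or.inl (bneg3 h)))
  rcases (iff_of_eq (Bool.or_eq_true _ _)).mp key with h | key
  · exact Or.inr (Or.inr (Or.inr (Or.inl (bneg3 h))))
  rcases (iff_of_eq (Bool.or_eq_true _ _)).mp key with h | key
  · exact Or.inr (Or.inr (Or.inr (Or.inr (Or.inl (bneg3 h)))))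
  rcases (iff_of_eq (Bool.or_eq_true _ _)).mp key with h | key
  · exact Or.inr (Or.inr (Or.inr (Or.inr (Or.inr (Or.inl (bneg3 h))))))
  rcases (iff_of_eq (Bool.or_eq_true _ _)).mp key with h | key
  · exact Or.inr (Or.inr (Or.inr (Or.inr (Or.inr (Or.inr (Or.inl (bneg3 h)))))))
  rcases (iff_of_eq (Bool.or_eq_true _ _)).mp key with h | key
  · exact Or.inr (Or.inr (Or.inr (Or.inr (Or.inr (Or.inr (Or.inr (Or.inl (bneg3 h))))))))
  rcases (iff_of_eq (Bool.or_eq_true _ _)).mp key with h | key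
  · exact Or.inr (Or.inr (Or.inr (Or.inr (Or.inr (Or.inr (Or.inr (Or.inr (Or.inl (bneg3 h)))))))))
  rcases (iff_of_eq (Bool.or_eq_true _ _)).mp key with h | key
  · exact Or.inr (Or.inr (Or.inr (Or.inr (Or.inr (Or.inr (Or.inr (Or.inr (Or.inr (Or.inl (bneg3 h))))))))))
  rcases (iff_of_eq (Bool.or_eq_true _ _)).mp key with h | key
  · exact Or.inr (Or.inr (Or.inr (Or.inr (Or.inr (Or.inr (Or.inr (Or.inr (Or.inr (Or.inr (Or.inl (bneg3 h)))))))))))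
  rcases (iff_of_eq (Bool.or_eq_true _ _)).mp key with h | key
  · exact Or.inr (Or.inr (Or.inr (Or.inr (Or.inr (Or.inr (Or.inr (Or.inr (Or.inr (Or.inr (Or.inr (Or.inl (bneg3 h))))))))))))
  rcases (iff_of_eq (Bool.or_eq_true _ _)).mp key with h | key
  · exact Or.inr (Or.inr (Or.inr (Or.inr (Or.inr (Or.inr (Or.inr (Or.inr (Or.inr (Or.inr (Or.inr (Or.inr (Or.inl (bneg3 h)))))))))))))
  rcases (iff_of_eq (Bool.or_eq_true _ _)).mp key with h | key
  · exact Or.inr (Or.inr (Or.inr (Or.inr (Or.inr (Or.inr (Or.inr (Or.inr (Or.inr (Or.inr (Or.inr (Or.inr (Or.inr (Or.inl (bneg3 h))))))))))))))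
  rcases (iff_of_eq (Bool.or_eq_true _ _)).mp key with h | key
  · exact Or.inr (Or.inr (Or.inr (Or.inr (Or.inr (Or.inr (Or.inr (Or.inr (Or.inr (Or.inr (Or.inr (Or.inr (Or.inr (Or.inr (Or.inl (bneg3 h)))))))))))))))
  rcases (iff_of_eq (Bool.or_eq_true _ _)).mp key with h | key
  · exact Or.inr (Or.inr (Or.inr (Or.inr (Or.inr (Or.inr (Or.inr (Or.inr (Or.inr (Or.inr (Or.inr (Or.inr (Or.inr (Or.inr (Or.inr (Or.inl (bneg3 h))))))))))))))))
  rcases (iff_of_eq (Bool.or_eq_true _ _)).mp key with h | key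
  · exact Or.inr (Or.inr (Or.inr (Or.inr (Or.inr (Or.inr (Or.inr (Or.inr (Or.inr (Or.inr (Or.inr (Or.inr (Or.inr (Or.inr (Or.inr (Or.inr (Or.inl (bneg3 h)))))))))))))))))
  rcases (iff_of_eq (Bool.or_eq_true _ _)).mp key with h | key
  · exact Or.inr (Or.inr (Or.inr (Or.inr (Or.inr (Or.inr (Or.inr (Or.inr (Or.inr (Or.inr (Or.inr (Or.inr (Or.inr (Or.inr (Or.inr (Or.inr (Or.inr (Or.inl (bneg3 h))))))))))))))))))
  rcases (iff_of_eq (Bool.or_eq_true _ _)).mp key with h | key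
  · exact Or.inr (Or.inr (Or.inr (Or.inr (Or.inr (Or.inr (Or.inr (Or.inr (Or.inr (Or.inr (Or.inr (Or.inr (Or.inr (Or.inr (Or.inr (Or.inr (Or.inr (Or.inr (Or.inl (bneg3 h)))))))))))))))))))
  exact Or.inr (Or.inr (Or.inr (Or.inr (Or.inr (Or.inr (Or.inr (Or.inr (Or.inr (Or.inr (Or.inr (Or.inr (Or.inr (Or.inr (Or.inr (Or.inr (Or.inr (Or.inr (Or.inr (bneg3 key)))))))))))))))))))


end BoolLemmas

lemma cdBool : ∀ (e01 e02 e03 e04 e05 e12 e13 e14 e15 e23 e24 e25 e34 e35 e45 : Bool),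
    ((!(e01 && e02 && e12)) && ((!(e01 && e03 && e13)) && ((!(e01 && e04 && e14)) && ((!(e01 && e05 && e15)) && ((!(e02 && e03 && e23)) && ((!(e02 && e04 && e24)) && ((!(e02 && e05 && e25)) && ((!(e03 && e04 && e34)) && ((!(e03 && e05 && e35)) && ((!(e04 && e05 && e45)) && ((!(e12 && e13 && e23)) && ((!(e12 && e14 && e24)) && ((!(e12 && e15 && e25)) && ((!(e13 && e14 && e34)) && ((!(e13 && e15 && e35)) && ((!(e14 && e15 && e45)) && ((!(e23 && e24 && e34)) && ((!(e23 && e25 && e35)) && ((!(e24 && e25 && e45)) && (!(e34 && e35 && e45))))))))))))))))))))) = true →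
    e01 = true →
    ((e02 || e03 || e23) && ((e02 || e04 || e24) && ((e02 || e05 || e25) && ((e03 || e04 || e34) && ((e03 || e05 || e35) && ((e04 || e05 || e45) && ((e12 || e13 || e23) && ((e12 || e14 || e24) && ((e12 || e15 || e25) && ((e13 || e14 || e34) && ((e13 || e15 || e35) && ((e14 || e15 || e45) && ((e23 || e24 || e34) && ((e23 || e25 || e35) && ((e24 || e25 || e45) && (e34 || e35 || e45)))))))))))))))) = true → False := by decide

lemma cdP (p01 p02 p03 p04 p05 p12 p13 p14 p15 p23 p24 p25 p34 p35 p45 : Prop)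
    (t012 : ¬(p01 ∧ p02 ∧ p12)) (t013 : ¬(p01 ∧ p03 ∧ p13)) (t014 : ¬(p01 ∧ p04 ∧ p14)) (t015 : ¬(p01 ∧ p05 ∧ p15)) (t023 : ¬(p02 ∧ p03 ∧ p23)) (t024 : ¬(p02 ∧ p04 ∧ p24)) (t025 : ¬(p02 ∧ p05 ∧ p25)) (t034 : ¬(p03 ∧ p04 ∧ p34)) (t035 : ¬(p03 ∧ p05 ∧ p35)) (t045 : ¬(p04 ∧ p05 ∧ p45)) (t123 : ¬(p12 ∧ p13 ∧ p23)) (t124 : ¬(p12 ∧ p14 ∧ p24)) (t125 : ¬(p12 ∧ p15 ∧ p25)) (t134 : ¬(p13 ∧ p14 ∧ p34)) (t135 : ¬(p13 ∧ p15 ∧ p35)) (t145 : ¬(p14 ∧ p15 ∧ p45)) (t234 : ¬(p23 ∧ p24 ∧ p34)) (t235 : ¬(p23 ∧ p25 ∧ p35)) (t245 : ¬(p24 ∧ p25 ∧ p45)) (t345 : ¬(p34 ∧ p35 ∧ p45))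
    (hcd : p01)
    (w023 : ¬(¬p02 ∧ ¬p03 ∧ ¬p23)) (w024 : ¬(¬p02 ∧ ¬p04 ∧ ¬p24)) (w025 : ¬(¬p02 ∧ ¬p05 ∧ ¬p25)) (w034 : ¬(¬p03 ∧ ¬p04 ∧ ¬p34)) (w035 : ¬(¬p03 ∧ ¬p05 ∧ ¬p35)) (w045 : ¬(¬p04 ∧ ¬p05 ∧ ¬p45)) (w123 : ¬(¬p12 ∧ ¬p13 ∧ ¬p23)) (w124 : ¬(¬p12 ∧ ¬p14 ∧ ¬p24)) (w125 : ¬(¬p12 ∧ ¬p15 ∧ ¬p25)) (w134 : ¬(¬p13 ∧ ¬p14 ∧ ¬p34)) (w135 : ¬(¬p13 ∧ ¬p15 ∧ ¬p35)) (w145 : ¬(¬p14 ∧ ¬p15 ∧ ¬p45)) (w234 : ¬(¬p23 ∧ ¬p24 ∧ ¬p34)) (w235 : ¬(¬p23 ∧ ¬p25 ∧ ¬p35)) (w245 : ¬(¬p24 ∧ ¬p25 ∧ ¬p45)) (w345 : ¬(¬p34 ∧ ¬p35 ∧ ¬p45)) : False := by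
  classical
  exact cdBool (decide p01) (decide p02) (decide p03) (decide p04) (decide p05) (decide p12) (decide p13) (decide p14) (decide p15) (decide p23) (decide p24) (decide p25) (decide p34) (decide p35) (decide p45)
    ((iff_of_eq (Bool.and_eq_true _ _)).mpr ⟨bnot3 t012, (iff_of_eq (Bool.and_eq_true _ _)).mpr ⟨bnot3 t013, (iff_of_eq (Bool.and_eq_true _ _)).mpr ⟨bnot3 t014, (iff_of_eq (Bool.and_eq_true _ _)).mpr ⟨bnot3 t015, (iff_of_eq (Bool.and_eq_true _ _)).mpr ⟨bnot3 t023, (iff_of_eq (Bool.and_eq_true _ _)).mpr ⟨bnot3 t024, (iff_of_eq (Bool.and_eq_true _ _)).mpr ⟨bnot3 t025, (iff_of_eq (Bool.and_eq_true _ _)).mpr ⟨bnot3 t034, (iff_of_eq (Bool.and_eq_true _ _)).mpr ⟨bnot3 t035, (iff_of_eq (Bool.and_eq_true _ _)).mpr ⟨bnot3 t045, (iff_of_eq (Bool.and_eq_true _ _)).mpr ⟨bnot3 t123, (iff_of_eq (Bool.and_eq_true _ _)).mpr ⟨bnot3 t124, (iff_of_eq (Bool.and_eq_true _ _)).mpr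 ⟨bnot3 t125, (iff_of_eq (Bool.and_eq_true _ _)).mpr ⟨bnot3 t134, (iff_of_eq (Bool.and_eq_true _ _)).mpr ⟨bnot3 t135, (iff_of_eq (Bool.and_eq_true _ _)).mpr ⟨bnot3 t145, (iff_of_eq (Bool.and_eq_true _ _)).mpr ⟨bnot3 t234, (iff_of_eq (Bool.and_eq_true _ _)).mpr ⟨bnot3 t235, (iff_of_eq (Bool.and_eq_true _ _)).mpr ⟨bnot3 t245, bnot3 t345⟩⟩⟩⟩⟩⟩⟩⟩⟩⟩⟩⟩⟩⟩⟩⟩⟩⟩⟩)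
    (decide_eq_true hcd)
    ((iff_of_eq (Bool.and_eq_true _ _)).mpr ⟨bor3 w023, (iff_of_eq (Bool.and_eq_true _ _)).mpr ⟨bor3 w024, (iff_of_eq (Bool.and_eq_true _ _)).mpr ⟨bor3 w025, (iff_of_eq (Bool.and_eq_true _ _)).mpr ⟨bor3 w034, (iff_of_eq (Bool.and_eq_true _ _)).mpr ⟨bor3 w035, (iff_of_eq (Bool.and_eq_true _ _)).mpr ⟨bor3 w045, (iff_of_eq (Bool.and_eq_true _ _)).mpr ⟨bor3 w123, (iff_of_eq (Bool.and_eq_true _ _)).mpr ⟨bor3 w124, (iff_of_eq (Bool.and_eq_true _ _)).mpr ⟨bor3 w125, (iff_of_eq (Bool.and_eq_true _ _)).mpr ⟨bor3 w134, (iff_of_eq (Bool.and_eq_true _ _)).mpr ⟨bor3 w135, (iff_of_eq (Bool.and_eq_true _ _)).mpr ⟨bor3 w145, (iff_of_eq (Bool.and_eq_true _ _)).mpr ⟨bor3 w234, (iff_of_eq (Bool.and_eq_true _ _)).mpr ⟨bor3 w235, (iff_of_eq (Bool.and_eq_true _ _)).mpr ⟨bor3 w245, bor3 w345⟩⟩⟩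⟩⟩⟩⟩⟩⟩⟩⟩⟩⟩⟩⟩)

set_option maxHeartbeats 40000000 in
lemma fiveBool : ∀ (e01 e02 e03 e04 e12 e13 e14 e23 e24 e34 : Bool),
    ((!(e01 && e02 && e12)) && ((!(e01 && e03 && e13)) && ((!(e01 && e04 && e14)) && ((!(e02 && e03 && e23)) && ((!(e02 && e04 && e24)) && ((!(e03 && e04 && e34)) && ((!(e12 && e13 && e23)) && ((!(e12 && e14 && e24)) && ((!(e13 && e14 && e34)) && (!(e23 && e24 && e34))))))))))) = true →
    ((((!e01) && ((!e02) && (!e12))) || (((!e01) && ((!e03) && (!e13))) || (((!e01) && ((!e04) && (!e14))) || (((!e02) && ((!e03) && (!e23))) || (((!e02) && ((!e04) && (!e24))) || (((!e03) && ((!e04) && (!e34))) || (((!e12) && ((!e13) && (!e23))) || (((!e12) && ((!e14) && (!e24))) || (((!e13) && ((!e14) && (!e34))) || ((!e23) && ((!e24) && (!e34)))))))))))) || ((e01 || (e02 || (e03 || e04))) && ((e01 || (e12 || (e13 || e14))) && ((e02 || (e12 || (e23 || e24))) && ((e03 || (e13 || (e23 || e34))) && ((e04 || (e14 || (e24 ||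 e34))) && ((e01 || ((e02 && e12) || ((e03 && e13) || (e04 && e14)))) && ((e02 || ((e01 && e12) || ((e03 && e23) || (e04 && e24)))) && ((e03 || ((e01 && e13) || ((e02 && e23) || (e04 && e34)))) && ((e04 || ((e01 && e14) || ((e02 && e24) || (e03 && e34)))) && ((e12 || ((e01 && e02) || ((e13 && e23) || (e14 && e24)))) && ((e13 || ((e01 && e03) || ((e12 && e23) || (e14 && e34)))) && ((e14 || ((e01 && e04) || ((e12 && e24) || (e13 && e34)))) && ((e23 || ((e02 && e03) || ((e12 && e13) || (e24 && e34)))) && ((e24 || ((e02 && e04) || ((e12 && e14) || (e23 && e34)))) && (e34 || ((e03 && e04) || ((e13 && e14) || (e23 && e24))))))))))))))))))) = true := by decide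

lemma fiveP (p01 p02 p03 p04 p12 p13 p14 p23 p24 p34 : Prop)
    (t012 : ¬(p01 ∧ p02 ∧ p12)) (t013 : ¬(p01 ∧ p03 ∧ p13)) (t014 : ¬(p01 ∧ p04 ∧ p14)) (t023 : ¬(p02 ∧ p03 ∧ p23)) (t024 : ¬(p02 ∧ p04 ∧ p24)) (t034 : ¬(p03 ∧ p04 ∧ p34)) (t123 : ¬(p12 ∧ p13 ∧ p23)) (t124 : ¬(p12 ∧ p14 ∧ p24)) (t134 : ¬(p13 ∧ p14 ∧ p34)) (t234 : ¬(p23 ∧ p24 ∧ p34)) :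
    ((¬p01 ∧ (¬p02 ∧ ¬p12)) ∨ ((¬p01 ∧ (¬p03 ∧ ¬p13)) ∨ ((¬p01 ∧ (¬p04 ∧ ¬p14)) ∨ ((¬p02 ∧ (¬p03 ∧ ¬p23)) ∨ ((¬p02 ∧ (¬p04 ∧ ¬p24)) ∨ ((¬p03 ∧ (¬p04 ∧ ¬p34)) ∨ ((¬p12 ∧ (¬p13 ∧ ¬p23)) ∨ ((¬p12 ∧ (¬p14 ∧ ¬p24)) ∨ ((¬p13 ∧ (¬p14 ∧ ¬p34)) ∨ (¬p23 ∧ (¬p24 ∧ ¬p34))))))))))) ∨ ((p01 ∨ (p02 ∨ (p03 ∨ p04))) ∧ ((p01 ∨ (p12 ∨ (p13 ∨ p14))) ∧ ((p02 ∨ (p12 ∨ (p23 ∨ p24))) ∧ ((p03 ∨ (p13 ∨ (p23 ∨ p34))) ∧ ((p04 ∨ (p14 ∨ (p24 ∨ p34))) ∧ ((p01 ∨ ((p02 ∧ p12) ∨ ((p03 ∧ p13) ∨ (p04 ∧ p14)))) ∧ ((p02 ∨ ((p01 ∧ p12) ∨ ((p03 ∧ p23) ∨ (p04 ∧ p24))))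 ∧ ((p03 ∨ ((p01 ∧ p13) ∨ ((p02 ∧ p23) ∨ (p04 ∧ p34)))) ∧ ((p04 ∨ ((p01 ∧ p14) ∨ ((p02 ∧ p24) ∨ (p03 ∧ p34)))) ∧ ((p12 ∨ ((p01 ∧ p02) ∨ ((p13 ∧ p23) ∨ (p14 ∧ p24)))) ∧ ((p13 ∨ ((p01 ∧ p03) ∨ ((p12 ∧ p23) ∨ (p14 ∧ p34)))) ∧ ((p14 ∨ ((p01 ∧ p04) ∨ ((p12 ∧ p24) ∨ (p13 ∧ p34)))) ∧ ((p23 ∨ ((p02 ∧ p03) ∨ ((p12 ∧ p13) ∨ (p24 ∧ p34)))) ∧ ((p24 ∨ ((p02 ∧ p04) ∨ ((p12 ∧ p14) ∨ (p23 ∧ p34)))) ∧ (p34 ∨ ((p03 ∧ p04) ∨ ((p13 ∧ p14) ∨ (p23 ∧ p24)))))))))))))))))) := by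
  classical
  have key := fiveBool (decide p01) (decide p02) (decide p03) (decide p04) (decide p12) (decide p13) (decide p14) (decide p23) (decide p24) (decide p34)
    ((iff_of_eq (Bool.and_eq_true _ _)).mpr ⟨bnot3 t012, (iff_of_eq (Bool.and_eq_true _ _)).mpr ⟨bnot3 t013, (iff_of_eq (Bool.and_eq_true _ _)).mpr ⟨bnot3 t014, (iff_of_eq (Bool.and_eq_true _ _)).mpr ⟨bnot3 t023, (iff_of_eq (Bool.and_eq_true _ _)).mpr ⟨bnot3 t024, (iff_of_eq (Bool.and_eq_true _ _)).mpr ⟨bnot3 t034, (iff_of_eq (Bool.and_eq_true _ _)).mpr ⟨bnot3 t123, (iff_of_eq (Bool.and_eq_true _ _)).mpr ⟨bnot3 t124, (iff_of_eq (Bool.and_eq_true _ _)).mpr ⟨bnot3 t134, bnot3 t234⟩⟩⟩⟩⟩⟩⟩⟩⟩)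
  simpa using key

section Ramsey
variable {H : SimpleGraph V}

lemma exists_six (W : Finset V) (hW : 6 ≤ W.card) :
    ∃ a b c d e f : V, a ∈ W ∧ b ∈ W ∧ c ∈ W ∧ d ∈ W ∧ e ∈ W ∧ f ∈ W ∧
      a ≠ b ∧ a ≠ c ∧ a ≠ d ∧ a ≠ e ∧ a ≠ f ∧ b ≠ c ∧ b ≠ d ∧ b ≠ e ∧ b ≠ f ∧
      c ≠ d ∧ c ≠ e ∧ c ≠ f ∧ d ≠ e ∧ d ≠ f ∧ e ≠ f := by
  obtain ⟨a, ha⟩ := card_pos.1 (show 0 < W.card by omega)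
  obtain ⟨b, hb⟩ := card_pos.1 (show 0 < (W.erase a).card by
    rw [card_erase_of_mem ha]; omega)
  obtain ⟨c, hc⟩ := card_pos.1 (show 0 < ((W.erase a).erase b).card by
    rw [card_erase_of_mem hb, card_erase_of_mem ha]; omega)
  obtain ⟨d, hd⟩ := card_pos.1 (show 0 < (((W.erase a).erase b).erase c).card by
    rw [card_erase_of_mem hc, card_erase_of_mem hb, card_erase_of_mem ha]; omega)
  obtain ⟨e, he⟩ := card_pos.1 (show 0 < ((((W.erase a).erase b).erase c).erase d).card by
    rw [card_erase_of_mem hd, card_erase_of_mem hc, card_erase_of_mem hb, card_erase_of_mem ha]; omega)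
  obtain ⟨f, hf⟩ := card_pos.1 (show 0 < (((((W.erase a).erase b).erase c).erase d).erase e).card by
    rw [card_erase_of_mem he, card_erase_of_mem hd, card_erase_of_mem hc, card_erase_of_mem hb, card_erase_of_mem ha]; omega)
  have nba : b ≠ a := ne_of_mem_erase hb
  have hmba : b ∈ W := mem_of_mem_erase hb
  have ncb : c ≠ b := ne_of_mem_erase hc
  have hmcb : c ∈ (W.erase a) := mem_of_mem_erase hc
  have nca : c ≠ a := ne_of_mem_erase hmcb
  have hmca : c ∈ W := mem_of_mem_erase hmcb
  have ndc : d ≠ c := ne_of_mem_erase hd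
  have hmdc : d ∈ ((W.erase a).erase b) := mem_of_mem_erase hd
  have ndb : d ≠ b := ne_of_mem_erase hmdc
  have hmdb : d ∈ (W.erase a) := mem_of_mem_erase hmdc
  have nda : d ≠ a := ne_of_mem_erase hmdb
  have hmda : d ∈ W := mem_of_mem_erase hmdb
  have ned : e ≠ d := ne_of_mem_erase he
  have hmed : e ∈ (((W.erase a).erase b).erase c) := mem_of_mem_erase he
  have nec : e ≠ c := ne_of_mem_erase hmed
  have hmec : e ∈ ((W.erase a).erase b) := mem_of_mem_erase hmed
  have neb : e ≠ b := ne_of_mem_erase hmec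
  have hmeb : e ∈ (W.erase a) := mem_of_mem_erase hmec
  have nea : e ≠ a := ne_of_mem_erase hmeb
  have hmea : e ∈ W := mem_of_mem_erase hmeb
  have nfe : f ≠ e := ne_of_mem_erase hf
  have hmfe : f ∈ ((((W.erase a).erase b).erase c).erase d) := mem_of_mem_erase hf
  have nfd : f ≠ d := ne_of_mem_erase hmfe
  have hmfd : f ∈ (((W.erase a).erase b).erase c) := mem_of_mem_erase hmfe
  have nfc : f ≠ c := ne_of_mem_erase hmfd
  have hmfc : f ∈ ((W.erase a).erase b) := mem_of_mem_erase hmfd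
  have nfb : f ≠ b := ne_of_mem_erase hmfc
  have hmfb : f ∈ (W.erase a) := mem_of_mem_erase hmfc
  have nfa : f ≠ a := ne_of_mem_erase hmfb
  have hmfa : f ∈ W := mem_of_mem_erase hmfb
  exact ⟨a, b, c, d, e, f, ha, hmba, hmca, hmda, hmea, hmfa, (nba).symm, (nca).symm, (nda).symm, (nea).symm, (nfa).symm, (ncb).symm, (ndb).symm, (neb).symm, (nfb).symm, (ndc).symm, (nec).symm, (nfc).symm, (ned).symm, (nfd).symm, (nfe).symm⟩

lemma R33F {H : SimpleGraph V} (hH : H.CliqueFree 3) (W : Finset V) (hW : 6 ≤ W.card) :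
    ∃ x ∈ W, ∃ y ∈ W, ∃ z ∈ W, x ≠ y ∧ x ≠ z ∧ y ≠ z ∧
      ¬H.Adj x y ∧ ¬H.Adj x z ∧ ¬H.Adj y z := by
  obtain ⟨a, b, c, d, e, f, ha, hb, hc, hd, he, hf,
    nab, nac, nad, nae, naf, nbc, nbd, nbe, nbf, ncd, nce, ncf, nde, ndf, nef⟩ :=
    exists_six W hW
  have key := r33P (H.Adj a b) (H.Adj a c) (H.Adj a d) (H.Adj a e) (H.Adj a f) (H.Adj b c) (H.Adj b d) (H.Adj b e) (H.Adj b f) (H.Adj c d) (H.Adj c e) (H.Adj c f) (H.Adj d e) (H.Adj d f) (H.Adj e f)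
    (fun hh => tri3' hH hh.1 hh.2.1 hh.2.2) (fun hh => tri3' hH hh.1 hh.2.1 hh.2.2) (fun hh => tri3' hH hh.1 hh.2.1 hh.2.2) (fun hh => tri3' hH hh.1 hh.2.1 hh.2.2) (fun hh => tri3' hH hh.1 hh.2.1 hh.2.2) (fun hh => tri3' hH hh.1 hh.2.1 hh.2.2) (fun hh => tri3' hH hh.1 hh.2.1 hh.2.2) (fun hh => tri3' hH hh.1 hh.2.1 hh.2.2) (fun hh => tri3' hH hh.1 hh.2.1 hh.2.2) (fun hh => tri3' hH hh.1 hh.2.1 hh.2.2) (fun hh => tri3' hH hh.1 hh.2.1 hh.2.2) (fun hh => tri3' hH hh.1 hh.2.1 hh.2.2) (fun hh => tri3' hH hh.1 hh.2.1 hh.2.2) (fun hh => tri3' hH hh.1 hh.2.1 hh.2.2) (fun hh => tri3' hH hh.1 hh.2.1 hh.2.2) (fun hh => tri3' hH hh.1 hh.2.1 hh.2.2) (fun hh => tri3' hH hh.1 hh.2.1 hh.2.2) (fun hh => tri3' hH hh.1 hh.2.1 hh.2.2) (fun hh => tri3' hH hh.1 hh.2.1 hh.2.2) (fun hh => tri3'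 hH hh.1 hh.2.1 hh.2.2)
  rcases key with ⟨m1, m2, m3⟩ | key
  · exact ⟨a, ha, b, hb, c, hc, nab, nac, nbc, m1, m2, m3⟩
  rcases key with ⟨m1, m2, m3⟩ | key
  · exact ⟨a, ha, b, hb, d, hd, nab, nad, nbd, m1, m2, m3⟩
  rcases key with ⟨m1, m2, m3⟩ | key
  · exact ⟨a, ha, b, hb, e, he, nab, nae, nbe, m1, m2, m3⟩
  rcases key with ⟨m1, m2, m3⟩ | key
  · exact ⟨a, ha, b, hb, f, hf, nab, naf, nbf, m1, m2, m3⟩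
  rcases key with ⟨m1, m2, m3⟩ | key
  · exact ⟨a, ha, c, hc, d, hd, nac, nad, ncd, m1, m2, m3⟩
  rcases key with ⟨m1, m2, m3⟩ | key
  · exact ⟨a, ha, c, hc, e, he, nac, nae, nce, m1, m2, m3⟩
  rcases key with ⟨m1, m2, m3⟩ | key
  · exact ⟨a, ha, c, hc, f, hf, nac, naf, ncf, m1, m2, m3⟩
  rcases key with ⟨m1, m2, m3⟩ | key
  · exact ⟨a, ha, d, hd, e, he, nad, nae, nde, m1, m2, m3⟩
  rcases key with ⟨m1, m2, m3⟩ | key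
  · exact ⟨a, ha, d, hd, f, hf, nad, naf, ndf, m1, m2, m3⟩
  rcases key with ⟨m1, m2, m3⟩ | key
  · exact ⟨a, ha, e, he, f, hf, nae, naf, nef, m1, m2, m3⟩
  rcases key with ⟨m1, m2, m3⟩ | key
  · exact ⟨b, hb, c, hc, d, hd, nbc, nbd, ncd, m1, m2, m3⟩
  rcases key with ⟨m1, m2, m3⟩ | key
  · exact ⟨b, hb, c, hc, e, he, nbc, nbe, nce, m1, m2, m3⟩
  rcases key with ⟨m1, m2, m3⟩ | key
  · exact ⟨b, hb, c, hc, f, hf, nbc, nbf, ncf, m1, m2, m3⟩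
  rcases key with ⟨m1, m2, m3⟩ | key
  · exact ⟨b, hb, d, hd, e, he, nbd, nbe, nde, m1, m2, m3⟩
  rcases key with ⟨m1, m2, m3⟩ | key
  · exact ⟨b, hb, d, hd, f, hf, nbd, nbf, ndf, m1, m2, m3⟩
  rcases key with ⟨m1, m2, m3⟩ | key
  · exact ⟨b, hb, e, he, f, hf, nbe, nbf, nef, m1, m2, m3⟩
  rcases key with ⟨m1, m2, m3⟩ | key
  · exact ⟨c, hc, d, hd, e, he, ncd, nce, nde, m1, m2, m3⟩
  rcases key with ⟨m1, m2, m3⟩ | key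
  · exact ⟨c, hc, d, hd, f, hf, ncd, ncf, ndf, m1, m2, m3⟩
  rcases key with ⟨m1, m2, m3⟩ | key
  · exact ⟨c, hc, e, he, f, hf, nce, ncf, nef, m1, m2, m3⟩
  obtain ⟨m1, m2, m3⟩ := key
  exact ⟨d, hd, e, he, f, hf, nde, ndf, nef, m1, m2, m3⟩

lemma R34F {H : SimpleGraph V} (hH : H.CliqueFree 3) (W : Finset V) (hW : 11 ≤ W.card) :
    ∃ I : Finset V, I ⊆ W ∧ I.card = 4 ∧ IndepOn H I := by
  classical
  obtain ⟨v, hv⟩ := card_pos.1 (show 0 < W.card by omega)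
  set Nv := (W.erase v).filter (fun w => H.Adj v w) with hNv
  have hNW : Nv ⊆ W.erase v := filter_subset _ _
  have hNadj : ∀ x ∈ Nv, H.Adj v x := by
    intro x hx
    rw [hNv, mem_filter] at hx
    exact hx.2
  by_cases h4 : 4 ≤ Nv.card
  · obtain ⟨I, hIN, hIc⟩ := Finset.exists_subset_card_eq h4
    refine ⟨I, fun x hx => mem_of_mem_erase (hNW (hIN hx)), hIc, ?_⟩
    intro x hx y hy hne hadj
    exact tri3' hH (hNadj x (hIN hx)) (hNadj y (hIN hy)) hadj
  · set Wv := (W.erase v) \ Nv with hWv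
    have hWvW : Wv ⊆ W.erase v := sdiff_subset
    have hWvcard : 6 ≤ Wv.card := by
      have h1 : Wv.card = (W.erase v).card - Nv.card := card_sdiff_of_subset hNW
      have h2 : (W.erase v).card = W.card - 1 := card_erase_of_mem hv
      omega
    have hWvnadj : ∀ x ∈ Wv, ¬H.Adj v x := by
      intro x hx hadj
      rw [hWv, mem_sdiff] at hx
      exact hx.2 (by rw [hNv, mem_filter]; exact ⟨hx.1, hadj⟩)
    obtain ⟨x, hx, y, hy, z, hz, nxy, nxz, nyz, exy, exz, eyz⟩ := R33F hH Wv hWvcard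
    have hxv : x ≠ v := ne_of_mem_erase (hWvW hx)
    have hyv : y ≠ v := ne_of_mem_erase (hWvW hy)
    have hzv : z ≠ v := ne_of_mem_erase (hWvW hz)
    refine ⟨{v, x, y, z}, ?_, ?_, ?_⟩
    · intro t ht
      simp only [mem_insert, mem_singleton] at ht
      rcases ht with rfl | rfl | rfl | rfl
      · exact hv
      · exact mem_of_mem_erase (hWvW hx)
      · exact mem_of_mem_erase (hWvW hy)
      · exact mem_of_mem_erase (hWvW hz)
    · rw [card_insert_of_notMem (by simp [hxv.symm, hyv.symm, hzv.symm]),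
        card_insert_of_notMem (by simp [nxy, nxz]),
        card_insert_of_notMem (by simp [nyz]), card_singleton]
    · intro s hs t ht hne hadj
      simp only [mem_insert, mem_singleton] at hs ht
      rcases hs with rfl | rfl | rfl | rfl <;> rcases ht with rfl | rfl | rfl | rfl <;>
        first
          | exact hne rfl
          | exact hWvnadj _ hx hadj | exact hWvnadj _ hy hadj | exact hWvnadj _ hz hadj
          | exact hWvnadj _ hx hadj.symm | exact hWvnadj _ hy hadj.symm
          | exact hWvnadj _ hz hadj.symm
          | exact exy hadj | exact exz hadj | exact eyz hadj
          | exact exy hadj.symm | exact exz hadj.symm | exact eyz hadj.symm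

end Ramsey

section Final5
variable {H : SimpleGraph V} {L : List (V × V)}

lemma finish3 (hL : ValidM H L) (hmax : ∀ L', ValidM H L' → L'.length ≤ L.length)
    (hlen : L.length = 5) {a b c : V}
    (has : a ∈ suppF L) (hac : clean H L a) (hbs : b ∈ suppF L) (hbc : clean H L b)
    (hcs : c ∈ suppF L) (hcc : clean H L c)
    (nab : a ≠ b) (nac : a ≠ c) (nbc : b ≠ c)
    (eab : ¬H.Adj a b) (eac : ¬H.Adj a c) (ebc : ¬H.Adj b c) :
    ∃ s : Finset V, IndepOn H s ∧ Fintype.card V ≤ s.card + 7 := by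
  have h2l := two_mul_length_le hL
  have hPs : ({a, b, c} : Finset V) ⊆ suppF L := by
    intro t ht
    simp only [mem_insert, mem_singleton] at ht
    rcases ht with rfl | rfl | rfl <;> assumption
  have hPi : IndepOn H {a, b, c} := by
    intro s hs t ht hne hadj
    simp only [mem_insert, mem_singleton] at hs ht
    rcases hs with rfl | rfl | rfl <;> rcases ht with rfl | rfl | rfl <;>
      first
        | exact hne rfl
        | exact eab hadj | exact eac hadj | exact ebc hadj
        | exact eab hadj.symm | exact eac hadj.symm | exact ebc hadj.symm
  have hPc : ∀ t ∈ ({a, b, c} : Finset V), clean H L t := by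
    intro t ht
    simp only [mem_insert, mem_singleton] at ht
    rcases ht with rfl | rfl | rfl <;> assumption
  obtain ⟨s, hs, hcard⟩ := build hL hmax {a, b, c} hPs hPi hPc
  have hc3 : ({a, b, c} : Finset V).card = 3 := by
    rw [card_insert_of_notMem (by simp [nab, nac]), card_insert_of_notMem (by simp [nbc]),
      card_singleton]
  rw [hc3] at hcard
  exact ⟨s, hs, by omega⟩

lemma clean_pair (hH : H.CliqueFree 3) (hL : ValidM H L)
    (hmax : ∀ L', ValidM H L' → L'.length ≤ L.length) {p : V × V} (hp : p ∈ L) :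
    ∃ x y, ((x = p.1 ∧ y = p.2) ∨ (x = p.2 ∧ y = p.1)) ∧ clean H L x ∧ H.Adj x y ∧
      x ∈ suppF L ∧ y ∈ suppF L ∧ mem2 x y L := by
  have hm : mem2 p.1 p.2 L := Or.inl (by simpa using hp)
  rcases exists_clean hH hL hmax hm with h | h
  · exact ⟨p.1, p.2, Or.inl ⟨rfl, rfl⟩, h, hL.adj' hp, hm.supp_left, hm.supp_right, hm⟩
  · exact ⟨p.2, p.1, Or.inr ⟨rfl, rfl⟩, h, (hL.adj' hp).symm, hm.supp_right, hm.supp_left,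
      hm.symm⟩

lemma cd_case (hH : H.CliqueFree 3) (hL : ValidM H L)
    (hmax : ∀ L', ValidM H L' → L'.length ≤ L.length) (hlen : L.length = 5)
    {c d b1 b2 b3 b4 : V}
    (hcs : c ∈ suppF L) (hcc : clean H L c) (hds : d ∈ suppF L) (hdc : clean H L d)
    (hb1s : b1 ∈ suppF L) (hb1c : clean H L b1) (hb2s : b2 ∈ suppF L) (hb2c : clean H L b2)
    (hb3s : b3 ∈ suppF L) (hb3c : clean H L b3) (hb4s : b4 ∈ suppF L) (hb4c : clean H L b4)
    (hcd : H.Adj c d)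
    (nc1 : c ≠ b1) (nc2 : c ≠ b2) (nc3 : c ≠ b3) (nc4 : c ≠ b4)
    (nd1 : d ≠ b1) (nd2 : d ≠ b2) (nd3 : d ≠ b3) (nd4 : d ≠ b4)
    (n12 : b1 ≠ b2) (n13 : b1 ≠ b3) (n14 : b1 ≠ b4)
    (n23 : b2 ≠ b3) (n24 : b2 ≠ b4) (n34 : b3 ≠ b4) :
    ∃ s : Finset V, IndepOn H s ∧ Fintype.card V ≤ s.card + 7 := by
  by_cases hwin : ∃ x y z : V, (x ∈ suppF L ∧ clean H L x) ∧ (y ∈ suppF L ∧ clean H L y) ∧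
      (z ∈ suppF L ∧ clean H L z) ∧ x ≠ y ∧ x ≠ z ∧ y ≠ z ∧
      ¬H.Adj x y ∧ ¬H.Adj x z ∧ ¬H.Adj y z
  · obtain ⟨x, y, z, ⟨hxs, hxc⟩, ⟨hys, hyc⟩, ⟨hzs, hzc⟩, nxy, nxz, nyz, e1, e2, e3⟩ := hwin
    exact finish3 hL hmax hlen hxs hxc hys hyc hzs hzc nxy nxz nyz e1 e2 e3
  · exfalso
    apply cdP (H.Adj c d) (H.Adj c b1) (H.Adj c b2) (H.Adj c b3) (H.Adj c b4) (H.Adj d b1) (H.Adj d b2) (H.Adj d b3) (H.Adj d b4) (H.Adj b1 b2) (H.Adj b1 b3) (H.Adj b1 b4) (H.Adj b2 b3) (H.Adj b2 b4) (H.Adj b3 b4)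
      (fun ht => tri3' hH ht.1 ht.2.1 ht.2.2) (fun ht => tri3' hH ht.1 ht.2.1 ht.2.2) (fun ht => tri3' hH ht.1 ht.2.1 ht.2.2) (fun ht => tri3' hH ht.1 ht.2.1 ht.2.2) (fun ht => tri3' hH ht.1 ht.2.1 ht.2.2) (fun ht => tri3' hH ht.1 ht.2.1 ht.2.2) (fun ht => tri3' hH ht.1 ht.2.1 ht.2.2) (fun ht => tri3' hH ht.1 ht.2.1 ht.2.2) (fun ht => tri3' hH ht.1 ht.2.1 ht.2.2) (fun ht => tri3' hH ht.1 ht.2.1 ht.2.2) (fun ht => tri3' hH ht.1 ht.2.1 ht.2.2) (fun ht => tri3' hH ht.1 ht.2.1 ht.2.2) (fun ht => tri3' hH ht.1 ht.2.1 ht.2.2) (fun ht => tri3' hH ht.1 ht.2.1 ht.2.2) (fun ht => tri3' hH ht.1 ht.2.1 ht.2.2) (fun ht => tri3' hH ht.1 ht.2.1 ht.2.2) (fun ht => tri3' hH ht.1 ht.2.1 ht.2.2) (fun ht => tri3' hH ht.1 ht.2.1 ht.2.2) (fun ht => tri3' hH ht.1 ht.2.1 ht.2.2) (fun ht => tri3'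 hH ht.1 ht.2.1 ht.2.2)
      hcd
      (fun hw => hwin ⟨c, b1, b2, ⟨hcs, hcc⟩, ⟨hb1s, hb1c⟩, ⟨hb2s, hb2c⟩, nc1, nc2, n12, hw.1, hw.2.1, hw.2.2⟩)
      (fun hw => hwin ⟨c, b1, b3, ⟨hcs, hcc⟩, ⟨hb1s, hb1c⟩, ⟨hb3s, hb3c⟩, nc1, nc3, n13, hw.1, hw.2.1, hw.2.2⟩)
      (fun hw => hwin ⟨c, b1, b4, ⟨hcs, hcc⟩, ⟨hb1s, hb1c⟩, ⟨hb4s, hb4c⟩, nc1, nc4, n14, hw.1, hw.2.1, hw.2.2⟩)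
      (fun hw => hwin ⟨c, b2, b3, ⟨hcs, hcc⟩, ⟨hb2s, hb2c⟩, ⟨hb3s, hb3c⟩, nc2, nc3, n23, hw.1, hw.2.1, hw.2.2⟩)
      (fun hw => hwin ⟨c, b2, b4, ⟨hcs, hcc⟩, ⟨hb2s, hb2c⟩, ⟨hb4s, hb4c⟩, nc2, nc4, n24, hw.1, hw.2.1, hw.2.2⟩)
      (fun hw => hwin ⟨c, b3, b4, ⟨hcs, hcc⟩, ⟨hb3s, hb3c⟩, ⟨hb4s, hb4c⟩, nc3, nc4, n34, hw.1, hw.2.1, hw.2.2⟩)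
      (fun hw => hwin ⟨d, b1, b2, ⟨hds, hdc⟩, ⟨hb1s, hb1c⟩, ⟨hb2s, hb2c⟩, nd1, nd2, n12, hw.1, hw.2.1, hw.2.2⟩)
      (fun hw => hwin ⟨d, b1, b3, ⟨hds, hdc⟩, ⟨hb1s, hb1c⟩, ⟨hb3s, hb3c⟩, nd1, nd3, n13, hw.1, hw.2.1, hw.2.2⟩)
      (fun hw => hwin ⟨d, b1, b4, ⟨hds, hdc⟩, ⟨hb1s, hb1c⟩, ⟨hb4s, hb4c⟩, nd1, nd4, n14, hw.1, hw.2.1, hw.2.2⟩)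
      (fun hw => hwin ⟨d, b2, b3, ⟨hds, hdc⟩, ⟨hb2s, hb2c⟩, ⟨hb3s, hb3c⟩, nd2, nd3, n23, hw.1, hw.2.1, hw.2.2⟩)
      (fun hw => hwin ⟨d, b2, b4, ⟨hds, hdc⟩, ⟨hb2s, hb2c⟩, ⟨hb4s, hb4c⟩, nd2, nd4, n24, hw.1, hw.2.1, hw.2.2⟩)
      (fun hw => hwin ⟨d, b3, b4, ⟨hds, hdc⟩, ⟨hb3s, hb3c⟩, ⟨hb4s, hb4c⟩, nd3, nd4, n34, hw.1, hw.2.1, hw.2.2⟩)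
      (fun hw => hwin ⟨b1, b2, b3, ⟨hb1s, hb1c⟩, ⟨hb2s, hb2c⟩, ⟨hb3s, hb3c⟩, n12, n13, n23, hw.1, hw.2.1, hw.2.2⟩)
      (fun hw => hwin ⟨b1, b2, b4, ⟨hb1s, hb1c⟩, ⟨hb2s, hb2c⟩, ⟨hb4s, hb4c⟩, n12, n14, n24, hw.1, hw.2.1, hw.2.2⟩)
      (fun hw => hwin ⟨b1, b3, b4, ⟨hb1s, hb1c⟩, ⟨hb3s, hb3c⟩, ⟨hb4s, hb4c⟩, n13, n14, n34, hw.1, hw.2.1, hw.2.2⟩)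
      (fun hw => hwin ⟨b2, b3, b4, ⟨hb2s, hb2c⟩, ⟨hb3s, hb3c⟩, ⟨hb4s, hb4c⟩, n23, n24, n34, hw.1, hw.2.1, hw.2.2⟩)


end Final5

section CoreMain
variable {H : SimpleGraph V} {L : List (V × V)}

lemma final5 (hH : H.CliqueFree 3) (hL : ValidM H L)
    (hmax : ∀ L', ValidM H L' → L'.length ≤ L.length) (hlen : L.length = 5) :
    ∃ s : Finset V, IndepOn H s ∧ Fintype.card V ≤ s.card + 7 := by
  rcases L with _ | ⟨p1, L⟩; · simp at hlen
  rcases L with _ | ⟨p2, L⟩; · simp at hlen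
  rcases L with _ | ⟨p3, L⟩; · simp at hlen
  rcases L with _ | ⟨p4, L⟩; · simp at hlen
  rcases L with _ | ⟨p5, L⟩; · simp at hlen
  have hnil : L = [] := List.eq_nil_of_length_eq_zero (by simpa using hlen)
  subst hnil
  set LL : List (V × V) := p1 :: p2 :: p3 :: p4 :: p5 :: [] with hLL
  have hlen5 : LL.length = 5 := by rw [hLL]; rfl
  have h2l := two_mul_length_le hL
  have hm1 : p1 ∈ LL := by rw [hLL]; simp
  have hm2 : p2 ∈ LL := by rw [hLL]; simp
  have hm3 : p3 ∈ LL := by rw [hLL]; simp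
  have hm4 : p4 ∈ LL := by rw [hLL]; simp
  have hm5 : p5 ∈ LL := by rw [hLL]; simp
  have d12 : Dp p1 p2 := List.rel_of_pairwise_cons hL.2 (by simp)
  have d13 : Dp p1 p3 := List.rel_of_pairwise_cons hL.2 (by simp)
  have d14 : Dp p1 p4 := List.rel_of_pairwise_cons hL.2 (by simp)
  have d15 : Dp p1 p5 := List.rel_of_pairwise_cons hL.2 (by simp)
  have d23 : Dp p2 p3 := List.rel_of_pairwise_cons hL.2.of_cons (by simp)
  have d24 : Dp p2 p4 := List.rel_of_pairwise_cons hL.2.of_cons (by simp)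
  have d25 : Dp p2 p5 := List.rel_of_pairwise_cons hL.2.of_cons (by simp)
  have d34 : Dp p3 p4 := List.rel_of_pairwise_cons hL.2.of_cons.of_cons (by simp)
  have d35 : Dp p3 p5 := List.rel_of_pairwise_cons hL.2.of_cons.of_cons (by simp)
  have d45 : Dp p4 p5 := List.rel_of_pairwise_cons hL.2.of_cons.of_cons.of_cons (by simp)
  obtain ⟨x1, y1, ho1, hxc1, hadj1, hxs1, hys1, hm21⟩ := clean_pair hH hL hmax hm1
  obtain ⟨x2, y2, ho2, hxc2, hadj2, hxs2, hys2, hm22⟩ := clean_pair hH hL hmax hm2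
  obtain ⟨x3, y3, ho3, hxc3, hadj3, hxs3, hys3, hm23⟩ := clean_pair hH hL hmax hm3
  obtain ⟨x4, y4, ho4, hxc4, hadj4, hxs4, hys4, hm24⟩ := clean_pair hH hL hmax hm4
  obtain ⟨x5, y5, ho5, hxc5, hadj5, hxs5, hys5, hm25⟩ := clean_pair hH hL hmax hm5
  have hvx1 : x1 = p1.1 ∨ x1 = p1.2 := ho1.elim (fun h => Or.inl h.1) (fun h => Or.inr h.1)
  have hvy1 : y1 = p1.1 ∨ y1 = p1.2 := ho1.elim (fun h => Or.inr h.2) (fun h => Or.inl h.2)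
  have hvx2 : x2 = p2.1 ∨ x2 = p2.2 := ho2.elim (fun h => Or.inl h.1) (fun h => Or.inr h.1)
  have hvy2 : y2 = p2.1 ∨ y2 = p2.2 := ho2.elim (fun h => Or.inr h.2) (fun h => Or.inl h.2)
  have hvx3 : x3 = p3.1 ∨ x3 = p3.2 := ho3.elim (fun h => Or.inl h.1) (fun h => Or.inr h.1)
  have hvy3 : y3 = p3.1 ∨ y3 = p3.2 := ho3.elim (fun h => Or.inr h.2) (fun h => Or.inl h.2)
  have hvx4 : x4 = p4.1 ∨ x4 = p4.2 := ho4.elim (fun h => Or.inl h.1) (fun h => Or.inr h.1)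
  have hvy4 : y4 = p4.1 ∨ y4 = p4.2 := ho4.elim (fun h => Or.inr h.2) (fun h => Or.inl h.2)
  have hvx5 : x5 = p5.1 ∨ x5 = p5.2 := ho5.elim (fun h => Or.inl h.1) (fun h => Or.inr h.1)
  have hvy5 : y5 = p5.1 ∨ y5 = p5.2 := ho5.elim (fun h => Or.inr h.2) (fun h => Or.inl h.2)
  have nxx12 : x1 ≠ x2 := dp_ne d12 hvx1 hvx2
  have nxy12 : x1 ≠ y2 := dp_ne d12 hvx1 hvy2
  have nyx12 : y1 ≠ x2 := dp_ne d12 hvy1 hvx2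
  have nyy12 : y1 ≠ y2 := dp_ne d12 hvy1 hvy2
  have nxx13 : x1 ≠ x3 := dp_ne d13 hvx1 hvx3
  have nxy13 : x1 ≠ y3 := dp_ne d13 hvx1 hvy3
  have nyx13 : y1 ≠ x3 := dp_ne d13 hvy1 hvx3
  have nyy13 : y1 ≠ y3 := dp_ne d13 hvy1 hvy3
  have nxx14 : x1 ≠ x4 := dp_ne d14 hvx1 hvx4
  have nxy14 : x1 ≠ y4 := dp_ne d14 hvx1 hvy4
  have nyx14 : y1 ≠ x4 := dp_ne d14 hvy1 hvx4
  have nyy14 : y1 ≠ y4 := dp_ne d14 hvy1 hvy4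
  have nxx15 : x1 ≠ x5 := dp_ne d15 hvx1 hvx5
  have nxy15 : x1 ≠ y5 := dp_ne d15 hvx1 hvy5
  have nyx15 : y1 ≠ x5 := dp_ne d15 hvy1 hvx5
  have nyy15 : y1 ≠ y5 := dp_ne d15 hvy1 hvy5
  have nxx23 : x2 ≠ x3 := dp_ne d23 hvx2 hvx3
  have nxy23 : x2 ≠ y3 := dp_ne d23 hvx2 hvy3
  have nyx23 : y2 ≠ x3 := dp_ne d23 hvy2 hvx3
  have nyy23 : y2 ≠ y3 := dp_ne d23 hvy2 hvy3
  have nxx24 : x2 ≠ x4 := dp_ne d24 hvx2 hvx4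
  have nxy24 : x2 ≠ y4 := dp_ne d24 hvx2 hvy4
  have nyx24 : y2 ≠ x4 := dp_ne d24 hvy2 hvx4
  have nyy24 : y2 ≠ y4 := dp_ne d24 hvy2 hvy4
  have nxx25 : x2 ≠ x5 := dp_ne d25 hvx2 hvx5
  have nxy25 : x2 ≠ y5 := dp_ne d25 hvx2 hvy5
  have nyx25 : y2 ≠ x5 := dp_ne d25 hvy2 hvx5
  have nyy25 : y2 ≠ y5 := dp_ne d25 hvy2 hvy5
  have nxx34 : x3 ≠ x4 := dp_ne d34 hvx3 hvx4
  have nxy34 : x3 ≠ y4 := dp_ne d34 hvx3 hvy4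
  have nyx34 : y3 ≠ x4 := dp_ne d34 hvy3 hvx4
  have nyy34 : y3 ≠ y4 := dp_ne d34 hvy3 hvy4
  have nxx35 : x3 ≠ x5 := dp_ne d35 hvx3 hvx5
  have nxy35 : x3 ≠ y5 := dp_ne d35 hvx3 hvy5
  have nyx35 : y3 ≠ x5 := dp_ne d35 hvy3 hvx5
  have nyy35 : y3 ≠ y5 := dp_ne d35 hvy3 hvy5
  have nxx45 : x4 ≠ x5 := dp_ne d45 hvx4 hvx5
  have nxy45 : x4 ≠ y5 := dp_ne d45 hvx4 hvy5
  have nyx45 : y4 ≠ x5 := dp_ne d45 hvy4 hvx5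
  have nyy45 : y4 ≠ y5 := dp_ne d45 hvy4 hvy5
  by_cases hcl1 : clean H LL y1
  · exact cd_case hH hL hmax hlen5 hxs1 hxc1 hys1 hcl1 hxs2 hxc2 hxs3 hxc3 hxs4 hxc4 hxs5 hxc5 hadj1 nxx12 nxx13 nxx14 nxx15 nyx12 nyx13 nyx14 nyx15 nxx23 nxx24 nxx25 nxx34 nxx35 nxx45
  simp only [clean, not_forall] at hcl1
  obtain ⟨u1, hu1, hw1⟩ := hcl1
  rw [not_not] at hw1
  by_cases hcl2 : clean H LL y2
  · exact cd_case hH hL hmax hlen5 hxs2 hxc2 hys2 hcl2 hxs1 hxc1 hxs3 hxc3 hxs4 hxc4 hxs5 hxc5 hadj2 nxx12.symm nxx23 nxx24 nxx25 nxy12.symm nyx23 nyx24 nyx25 nxx13 nxx14 nxx15 nxx34 nxx35 nxx45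
  simp only [clean, not_forall] at hcl2
  obtain ⟨u2, hu2, hw2⟩ := hcl2
  rw [not_not] at hw2
  by_cases hcl3 : clean H LL y3
  · exact cd_case hH hL hmax hlen5 hxs3 hxc3 hys3 hcl3 hxs1 hxc1 hxs2 hxc2 hxs4 hxc4 hxs5 hxc5 hadj3 nxx13.symm nxx23.symm nxx34 nxx35 nxy13.symm nxy23.symm nyx34 nyx35 nxx12 nxx14 nxx15 nxx24 nxx25 nxx45
  simp only [clean, not_forall] at hcl3
  obtain ⟨u3, hu3, hw3⟩ := hcl3
  rw [not_not] at hw3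
  by_cases hcl4 : clean H LL y4
  · exact cd_case hH hL hmax hlen5 hxs4 hxc4 hys4 hcl4 hxs1 hxc1 hxs2 hxc2 hxs3 hxc3 hxs5 hxc5 hadj4 nxx14.symm nxx24.symm nxx34.symm nxx45 nxy14.symm nxy24.symm nxy34.symm nyx45 nxx12 nxx13 nxx15 nxx23 nxx25 nxx35
  simp only [clean, not_forall] at hcl4
  obtain ⟨u4, hu4, hw4⟩ := hcl4
  rw [not_not] at hw4
  by_cases hcl5 : clean H LL y5
  · exact cd_case hH hL hmax hlen5 hxs5 hxc5 hys5 hcl5 hxs1 hxc1 hxs2 hxc2 hxs3 hxc3 hxs4 hxc4 hadj5 nxx15.symm nxx25.symm nxx35.symm nxx45.symm nxy15.symm nxy25.symm nxy35.symm nxy45.symm nxx12 nxx13 nxx14 nxx23 nxx24 nxx34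
  simp only [clean, not_forall] at hcl5
  obtain ⟨u5, hu5, hw5⟩ := hcl5
  rw [not_not] at hw5
  have key := fiveP (H.Adj x1 x2) (H.Adj x1 x3) (H.Adj x1 x4) (H.Adj x1 x5) (H.Adj x2 x3) (H.Adj x2 x4) (H.Adj x2 x5) (H.Adj x3 x4) (H.Adj x3 x5) (H.Adj x4 x5)
    (fun ht => tri3' hH ht.1 ht.2.1 ht.2.2) (fun ht => tri3' hH ht.1 ht.2.1 ht.2.2) (fun ht => tri3' hH ht.1 ht.2.1 ht.2.2) (fun ht => tri3' hH ht.1 ht.2.1 ht.2.2) (fun ht => tri3' hH ht.1 ht.2.1 ht.2.2) (fun ht => tri3' hH ht.1 ht.2.1 ht.2.2) (fun ht => tri3' hH ht.1 ht.2.1 ht.2.2) (fun ht => tri3' hH ht.1 ht.2.1 ht.2.2) (fun ht => tri3' hH ht.1 ht.2.1 ht.2.2) (fun ht => tri3' hH ht.1 ht.2.1 ht.2.2)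
  rcases key with (⟨w1, w2, w3⟩ | ⟨w1, w2, w3⟩ | ⟨w1, w2, w3⟩ | ⟨w1, w2, w3⟩ | ⟨w1, w2, w3⟩ | ⟨w1, w2, w3⟩ | ⟨w1, w2, w3⟩ | ⟨w1, w2, w3⟩ | ⟨w1, w2, w3⟩ | ⟨w1, w2, w3⟩) | ⟨nb1, nb2, nb3, nb4, nb5, cc12, cc13, cc14, cc15, cc23, cc24, cc25, cc34, cc35, cc45⟩
  · exact finish3 hL hmax hlen5 hxs1 hxc1 hxs2 hxc2 hxs3 hxc3 nxx12 nxx13 nxx23 w1 w2 w3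
  · exact finish3 hL hmax hlen5 hxs1 hxc1 hxs2 hxc2 hxs4 hxc4 nxx12 nxx14 nxx24 w1 w2 w3
  · exact finish3 hL hmax hlen5 hxs1 hxc1 hxs2 hxc2 hxs5 hxc5 nxx12 nxx15 nxx25 w1 w2 w3
  · exact finish3 hL hmax hlen5 hxs1 hxc1 hxs3 hxc3 hxs4 hxc4 nxx13 nxx14 nxx34 w1 w2 w3
  · exact finish3 hL hmax hlen5 hxs1 hxc1 hxs3 hxc3 hxs5 hxc5 nxx13 nxx15 nxx35 w1 w2 w3
  · exact finish3 hL hmax hlen5 hxs1 hxc1 hxs4 hxc4 hxs5 hxc5 nxx14 nxx15 nxx45 w1 w2 w3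
  · exact finish3 hL hmax hlen5 hxs2 hxc2 hxs3 hxc3 hxs4 hxc4 nxx23 nxx24 nxx34 w1 w2 w3
  · exact finish3 hL hmax hlen5 hxs2 hxc2 hxs3 hxc3 hxs5 hxc5 nxx23 nxx25 nxx35 w1 w2 w3
  · exact finish3 hL hmax hlen5 hxs2 hxc2 hxs4 hxc4 hxs5 hxc5 nxx24 nxx25 nxx45 w1 w2 w3
  · exact finish3 hL hmax hlen5 hxs3 hxc3 hxs4 hxc4 hxs5 hxc5 nxx34 nxx35 nxx45 w1 w2 w3
  have hm2s1 : mem2 y1 x1 LL := hm21.symm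
  have hm2s2 : mem2 y2 x2 LL := hm22.symm
  have hm2s3 : mem2 y3 x3 LL := hm23.symm
  have hm2s4 : mem2 y4 x4 LL := hm24.symm
  have hm2s5 : mem2 y5 x5 LL := hm25.symm
  have eqg12 : ∀ w, w ∈ US LL → ∀ w', w' ∈ US LL → H.Adj w y1 → H.Adj w' y2 → H.Adj x1 x2 → w = w' := by
    intro w hw w' hw' hwy hwy' hxx
    by_contra hne
    exact aug3 hL hmax hm2s1 hm2s2 ⟨nyy12, nyx12, nxy12, nxx12⟩ hw hw' hne hwy hxx hwy'.symm
  have eqg13 : ∀ w, w ∈ US LL → ∀ w', w' ∈ US LL → H.Adj w y1 → H.Adj w' y3 → H.Adj x1 x3 → w = w' := by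
    intro w hw w' hw' hwy hwy' hxx
    by_contra hne
    exact aug3 hL hmax hm2s1 hm2s3 ⟨nyy13, nyx13, nxy13, nxx13⟩ hw hw' hne hwy hxx hwy'.symm
  have eqg14 : ∀ w, w ∈ US LL → ∀ w', w' ∈ US LL → H.Adj w y1 → H.Adj w' y4 → H.Adj x1 x4 → w = w' := by
    intro w hw w' hw' hwy hwy' hxx
    by_contra hne
    exact aug3 hL hmax hm2s1 hm2s4 ⟨nyy14, nyx14, nxy14, nxx14⟩ hw hw' hne hwy hxx hwy'.symm
  have eqg15 : ∀ w, w ∈ US LL → ∀ w', w' ∈ US LL → H.Adj w y1 → H.Adj w' y5 → H.Adj x1 x5 → w = w' := by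
    intro w hw w' hw' hwy hwy' hxx
    by_contra hne
    exact aug3 hL hmax hm2s1 hm2s5 ⟨nyy15, nyx15, nxy15, nxx15⟩ hw hw' hne hwy hxx hwy'.symm
  have eqg21 : ∀ w, w ∈ US LL → ∀ w', w' ∈ US LL → H.Adj w y2 → H.Adj w' y1 → H.Adj x1 x2 → w = w' := by
    intro w hw w' hw' hwy hwy' hxx
    by_contra hne
    exact aug3 hL hmax hm2s2 hm2s1 ⟨nyy12.symm, nxy12.symm, nyx12.symm, nxx12.symm⟩ hw hw' hne hwy hxx.symm hwy'.symm
  have eqg23 : ∀ w, w ∈ US LL → ∀ w', w' ∈ US LL → H.Adj w y2 → H.Adj w' y3 → H.Adj x2 x3 → w = w' := by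
    intro w hw w' hw' hwy hwy' hxx
    by_contra hne
    exact aug3 hL hmax hm2s2 hm2s3 ⟨nyy23, nyx23, nxy23, nxx23⟩ hw hw' hne hwy hxx hwy'.symm
  have eqg24 : ∀ w, w ∈ US LL → ∀ w', w' ∈ US LL → H.Adj w y2 → H.Adj w' y4 → H.Adj x2 x4 → w = w' := by
    intro w hw w' hw' hwy hwy' hxx
    by_contra hne
    exact aug3 hL hmax hm2s2 hm2s4 ⟨nyy24, nyx24, nxy24, nxx24⟩ hw hw' hne hwy hxx hwy'.symm
  have eqg25 : ∀ w, w ∈ US LL → ∀ w', w' ∈ US LL → H.Adj w y2 → H.Adj w' y5 → H.Adj x2 x5 → w = w' := by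
    intro w hw w' hw' hwy hwy' hxx
    by_contra hne
    exact aug3 hL hmax hm2s2 hm2s5 ⟨nyy25, nyx25, nxy25, nxx25⟩ hw hw' hne hwy hxx hwy'.symm
  have eqg31 : ∀ w, w ∈ US LL → ∀ w', w' ∈ US LL → H.Adj w y3 → H.Adj w' y1 → H.Adj x1 x3 → w = w' := by
    intro w hw w' hw' hwy hwy' hxx
    by_contra hne
    exact aug3 hL hmax hm2s3 hm2s1 ⟨nyy13.symm, nxy13.symm, nyx13.symm, nxx13.symm⟩ hw hw' hne hwy hxx.symm hwy'.symm
  have eqg32 : ∀ w, w ∈ US LL → ∀ w', w' ∈ US LL → H.Adj w y3 → H.Adj w' y2 → H.Adj x2 x3 → w = w' := by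
    intro w hw w' hw' hwy hwy' hxx
    by_contra hne
    exact aug3 hL hmax hm2s3 hm2s2 ⟨nyy23.symm, nxy23.symm, nyx23.symm, nxx23.symm⟩ hw hw' hne hwy hxx.symm hwy'.symm
  have eqg34 : ∀ w, w ∈ US LL → ∀ w', w' ∈ US LL → H.Adj w y3 → H.Adj w' y4 → H.Adj x3 x4 → w = w' := by
    intro w hw w' hw' hwy hwy' hxx
    by_contra hne
    exact aug3 hL hmax hm2s3 hm2s4 ⟨nyy34, nyx34, nxy34, nxx34⟩ hw hw' hne hwy hxx hwy'.symm
  have eqg35 : ∀ w, w ∈ US LL → ∀ w', w' ∈ US LL → H.Adj w y3 → H.Adj w' y5 → H.Adj x3 x5 → w = w' := by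
    intro w hw w' hw' hwy hwy' hxx
    by_contra hne
    exact aug3 hL hmax hm2s3 hm2s5 ⟨nyy35, nyx35, nxy35, nxx35⟩ hw hw' hne hwy hxx hwy'.symm
  have eqg41 : ∀ w, w ∈ US LL → ∀ w', w' ∈ US LL → H.Adj w y4 → H.Adj w' y1 → H.Adj x1 x4 → w = w' := by
    intro w hw w' hw' hwy hwy' hxx
    by_contra hne
    exact aug3 hL hmax hm2s4 hm2s1 ⟨nyy14.symm, nxy14.symm, nyx14.symm, nxx14.symm⟩ hw hw' hne hwy hxx.symm hwy'.symm
  have eqg42 : ∀ w, w ∈ US LL → ∀ w', w' ∈ US LL → H.Adj w y4 → H.Adj w' y2 → H.Adj x2 x4 → w = w' := by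
    intro w hw w' hw' hwy hwy' hxx
    by_contra hne
    exact aug3 hL hmax hm2s4 hm2s2 ⟨nyy24.symm, nxy24.symm, nyx24.symm, nxx24.symm⟩ hw hw' hne hwy hxx.symm hwy'.symm
  have eqg43 : ∀ w, w ∈ US LL → ∀ w', w' ∈ US LL → H.Adj w y4 → H.Adj w' y3 → H.Adj x3 x4 → w = w' := by
    intro w hw w' hw' hwy hwy' hxx
    by_contra hne
    exact aug3 hL hmax hm2s4 hm2s3 ⟨nyy34.symm, nxy34.symm, nyx34.symm, nxx34.symm⟩ hw hw' hne hwy hxx.symm hwy'.symm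
  have eqg45 : ∀ w, w ∈ US LL → ∀ w', w' ∈ US LL → H.Adj w y4 → H.Adj w' y5 → H.Adj x4 x5 → w = w' := by
    intro w hw w' hw' hwy hwy' hxx
    by_contra hne
    exact aug3 hL hmax hm2s4 hm2s5 ⟨nyy45, nyx45, nxy45, nxx45⟩ hw hw' hne hwy hxx hwy'.symm
  have eqg51 : ∀ w, w ∈ US LL → ∀ w', w' ∈ US LL → H.Adj w y5 → H.Adj w' y1 → H.Adj x1 x5 → w = w' := by
    intro w hw w' hw' hwy hwy' hxx
    by_contra hne
    exact aug3 hL hmax hm2s5 hm2s1 ⟨nyy15.symm, nxy15.symm, nyx15.symm, nxx15.symm⟩ hw hw' hne hwy hxx.symm hwy'.symm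
  have eqg52 : ∀ w, w ∈ US LL → ∀ w', w' ∈ US LL → H.Adj w y5 → H.Adj w' y2 → H.Adj x2 x5 → w = w' := by
    intro w hw w' hw' hwy hwy' hxx
    by_contra hne
    exact aug3 hL hmax hm2s5 hm2s2 ⟨nyy25.symm, nxy25.symm, nyx25.symm, nxx25.symm⟩ hw hw' hne hwy hxx.symm hwy'.symm
  have eqg53 : ∀ w, w ∈ US LL → ∀ w', w' ∈ US LL → H.Adj w y5 → H.Adj w' y3 → H.Adj x3 x5 → w = w' := by
    intro w hw w' hw' hwy hwy' hxx
    by_contra hne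
    exact aug3 hL hmax hm2s5 hm2s3 ⟨nyy35.symm, nxy35.symm, nyx35.symm, nxx35.symm⟩ hw hw' hne hwy hxx.symm hwy'.symm
  have eqg54 : ∀ w, w ∈ US LL → ∀ w', w' ∈ US LL → H.Adj w y5 → H.Adj w' y4 → H.Adj x4 x5 → w = w' := by
    intro w hw w' hw' hwy hwy' hxx
    by_contra hne
    exact aug3 hL hmax hm2s5 hm2s4 ⟨nyy45.symm, nxy45.symm, nyx45.symm, nxx45.symm⟩ hw hw' hne hwy hxx.symm hwy'.symm
  have equ2 : u2 = u1 := by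
    rcases cc12 with h | ⟨ha, hb⟩ | ⟨ha, hb⟩ | ⟨ha, hb⟩
    · exact (eqg12 u1 hu1 u2 hu2 hw1 hw2 h).symm
    · exact (eqg23 u2 hu2 u3 hu3 hw2 hw3 hb).trans (eqg13 u1 hu1 u3 hu3 hw1 hw3 ha).symm
    · exact (eqg24 u2 hu2 u4 hu4 hw2 hw4 hb).trans (eqg14 u1 hu1 u4 hu4 hw1 hw4 ha).symm
    · exact (eqg25 u2 hu2 u5 hu5 hw2 hw5 hb).trans (eqg15 u1 hu1 u5 hu5 hw1 hw5 ha).symm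
  have equ3 : u3 = u1 := by
    rcases cc13 with h | ⟨ha, hb⟩ | ⟨ha, hb⟩ | ⟨ha, hb⟩
    · exact (eqg13 u1 hu1 u3 hu3 hw1 hw3 h).symm
    · exact (eqg32 u3 hu3 u2 hu2 hw3 hw2 hb).trans (eqg12 u1 hu1 u2 hu2 hw1 hw2 ha).symm
    · exact (eqg34 u3 hu3 u4 hu4 hw3 hw4 hb).trans (eqg14 u1 hu1 u4 hu4 hw1 hw4 ha).symm
    · exact (eqg35 u3 hu3 u5 hu5 hw3 hw5 hb).trans (eqg15 u1 hu1 u5 hu5 hw1 hw5 ha).symm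
  have equ4 : u4 = u1 := by
    rcases cc14 with h | ⟨ha, hb⟩ | ⟨ha, hb⟩ | ⟨ha, hb⟩
    · exact (eqg14 u1 hu1 u4 hu4 hw1 hw4 h).symm
    · exact (eqg42 u4 hu4 u2 hu2 hw4 hw2 hb).trans (eqg12 u1 hu1 u2 hu2 hw1 hw2 ha).symm
    · exact (eqg43 u4 hu4 u3 hu3 hw4 hw3 hb).trans (eqg13 u1 hu1 u3 hu3 hw1 hw3 ha).symm
    · exact (eqg45 u4 hu4 u5 hu5 hw4 hw5 hb).trans (eqg15 u1 hu1 u5 hu5 hw1 hw5 ha).symm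
  have equ5 : u5 = u1 := by
    rcases cc15 with h | ⟨ha, hb⟩ | ⟨ha, hb⟩ | ⟨ha, hb⟩
    · exact (eqg15 u1 hu1 u5 hu5 hw1 hw5 h).symm
    · exact (eqg52 u5 hu5 u2 hu2 hw5 hw2 hb).trans (eqg12 u1 hu1 u2 hu2 hw1 hw2 ha).symm
    · exact (eqg53 u5 hu5 u3 hu3 hw5 hw3 hb).trans (eqg13 u1 hu1 u3 hu3 hw1 hw3 ha).symm
    · exact (eqg54 u5 hu5 u4 hu4 hw5 hw4 hb).trans (eqg14 u1 hu1 u4 hu4 hw1 hw4 ha).symm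
  have iso1 : ∀ v, v ∈ US LL → H.Adj v y1 → v = u1 := by
    intro v hv hadjv
    rcases nb1 with h | h | h | h
    · exact (eqg12 v hv u2 hu2 hadjv hw2 h).trans equ2
    · exact (eqg13 v hv u3 hu3 hadjv hw3 h).trans equ3
    · exact (eqg14 v hv u4 hu4 hadjv hw4 h).trans equ4
    · exact (eqg15 v hv u5 hu5 hadjv hw5 h).trans equ5
  have iso2 : ∀ v, v ∈ US LL → H.Adj v y2 → v = u1 := by
    intro v hv hadjv
    rcases nb2 with h | h | h | h
    · exact (eqg21 v hv u1 hu1 hadjv hw1 h)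
    · exact (eqg23 v hv u3 hu3 hadjv hw3 h).trans equ3
    · exact (eqg24 v hv u4 hu4 hadjv hw4 h).trans equ4
    · exact (eqg25 v hv u5 hu5 hadjv hw5 h).trans equ5
  have iso3 : ∀ v, v ∈ US LL → H.Adj v y3 → v = u1 := by
    intro v hv hadjv
    rcases nb3 with h | h | h | h
    · exact (eqg31 v hv u1 hu1 hadjv hw1 h)
    · exact (eqg32 v hv u2 hu2 hadjv hw2 h).trans equ2
    · exact (eqg34 v hv u4 hu4 hadjv hw4 h).trans equ4
    · exact (eqg35 v hv u5 hu5 hadjv hw5 h).trans equ5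
  have iso4 : ∀ v, v ∈ US LL → H.Adj v y4 → v = u1 := by
    intro v hv hadjv
    rcases nb4 with h | h | h | h
    · exact (eqg41 v hv u1 hu1 hadjv hw1 h)
    · exact (eqg42 v hv u2 hu2 hadjv hw2 h).trans equ2
    · exact (eqg43 v hv u3 hu3 hadjv hw3 h).trans equ3
    · exact (eqg45 v hv u5 hu5 hadjv hw5 h).trans equ5
  have iso5 : ∀ v, v ∈ US LL → H.Adj v y5 → v = u1 := by
    intro v hv hadjv
    rcases nb5 with h | h | h | h
    · exact (eqg51 v hv u1 hu1 hadjv hw1 h)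
    · exact (eqg52 v hv u2 hu2 hadjv hw2 h).trans equ2
    · exact (eqg53 v hv u3 hu3 hadjv hw3 h).trans equ3
    · exact (eqg54 v hv u4 hu4 hadjv hw4 h).trans equ4
  have hend1 : ∀ t : V, t = p1.1 ∨ t = p1.2 → t = x1 ∨ t = y1 := by
    intro t ht
    rcases ho1 with ⟨e1, e2⟩ | ⟨e1, e2⟩ <;> rcases ht with rfl | rfl <;> simp [e1, e2]
  have hend2 : ∀ t : V, t = p2.1 ∨ t = p2.2 → t = x2 ∨ t = y2 := by
    intro t ht
    rcases ho2 with ⟨e1, e2⟩ | ⟨e1, e2⟩ <;> rcases ht with rfl | rfl <;> simp [e1, e2]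
  have hend3 : ∀ t : V, t = p3.1 ∨ t = p3.2 → t = x3 ∨ t = y3 := by
    intro t ht
    rcases ho3 with ⟨e1, e2⟩ | ⟨e1, e2⟩ <;> rcases ht with rfl | rfl <;> simp [e1, e2]
  have hend4 : ∀ t : V, t = p4.1 ∨ t = p4.2 → t = x4 ∨ t = y4 := by
    intro t ht
    rcases ho4 with ⟨e1, e2⟩ | ⟨e1, e2⟩ <;> rcases ht with rfl | rfl <;> simp [e1, e2]
  have hend5 : ∀ t : V, t = p5.1 ∨ t = p5.2 → t = x5 ∨ t = y5 := by
    intro t ht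
    rcases ho5 with ⟨e1, e2⟩ | ⟨e1, e2⟩ <;> rcases ht with rfl | rfl <;> simp [e1, e2]
  have hu1s : u1 ∉ suppF LL := fun hm => US_ne_supp hu1 hm rfl
  have hRcard : 11 ≤ (insert u1 (suppF LL)).card := by
    rw [card_insert_of_notMem hu1s, suppF_card hL, hlen5]
  obtain ⟨I, hIR, hIc, hIind⟩ := R34F hH (insert u1 (suppF LL)) hRcard
  have hcross : ∀ v, v ∈ (US LL).erase u1 → ∀ t ∈ I, ¬H.Adj v t := by
    intro v hv t ht hadj
    have hvU : v ∈ US LL := mem_of_mem_erase hv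
    have hvne : v ≠ u1 := ne_of_mem_erase hv
    rcases mem_insert.1 (hIR ht) with rfl | hts
    · exact US_indep hL hmax v hvU t hu1 hvne hadj
    · rw [mem_suppF] at hts
      obtain ⟨p, hp, htp⟩ := hts
      rw [hLL] at hp
      simp only [List.mem_cons, List.not_mem_nil, or_false] at hp
      rcases hp with rfl | hp
      · rcases hend1 t htp with rfl | rfl
        · exact hxc1 v hvU hadj
        · exact hvne (iso1 v hvU hadj)
      rcases hp with rfl | hp
      · rcases hend2 t htp with rfl | rfl
        · exact hxc2 v hvU hadj
        · exact hvne (iso2 v hvU hadj)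
      rcases hp with rfl | hp
      · rcases hend3 t htp with rfl | rfl
        · exact hxc3 v hvU hadj
        · exact hvne (iso3 v hvU hadj)
      rcases hp with rfl | hp
      · rcases hend4 t htp with rfl | rfl
        · exact hxc4 v hvU hadj
        · exact hvne (iso4 v hvU hadj)
      subst hp
      rcases hend5 t htp with rfl | rfl
      · exact hxc5 v hvU hadj
      · exact hvne (iso5 v hvU hadj)
  have hdisj : Disjoint ((US LL).erase u1) I := by
    rw [Finset.disjoint_left]
    intro a ha haI
    rcases mem_insert.1 (hIR haI) with rfl | has
    · exact (ne_of_mem_erase ha) rfl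
    · exact US_ne_supp (mem_of_mem_erase ha) has rfl
  refine ⟨(US LL).erase u1 ∪ I, ?_, ?_⟩
  · intro a ha b hb hne hadj
    rcases mem_union.1 ha with ha | ha <;> rcases mem_union.1 hb with hb | hb
    · exact US_indep hL hmax a (mem_of_mem_erase ha) b (mem_of_mem_erase hb) hne hadj
    · exact hcross a ha b hb hadj
    · exact hcross b hb a ha hadj.symm
    · exact hIind a ha b hb hne hadj
  · rw [card_union_of_disjoint hdisj, card_erase_of_mem hu1, US_card hL, hIc, hlen5]
    have hu1card : 0 < (US LL).card := card_pos.2 ⟨u1, hu1⟩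
    have hUc := US_card hL
    rw [hlen5] at hUc
    omega


lemma core (hH : H.CliqueFree 3) (hL : ValidM H L)
    (hmax : ∀ L', ValidM H L' → L'.length ≤ L.length) (k : ℕ) (hk : k ≤ 2)
    (hlen : L.length ≤ 2 * k + 1) :
    ∃ s : Finset V, IndepOn H s ∧ Fintype.card V ≤ s.card + L.length + k := by
  have h2l := two_mul_length_le hL
  by_cases hsmall : L.length ≤ k
  · obtain ⟨s, hs, hcard⟩ := build hL hmax ∅ (by simp) (by intro x hx; simp at hx)
      (by intro x hx; simp at hx)
    exact ⟨s, hs, by simp at hcard; omega⟩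
  by_cases h1 : L.length = k + 1
  · obtain ⟨x, hxs, hxc⟩ := pick1 hH hL hmax (by omega)
    obtain ⟨s, hs, hcard⟩ := build hL hmax {x} (by simpa using hxs)
      (by intro a ha b hb hne _; simp at ha hb; subst ha; subst hb; exact hne rfl)
      (by intro a ha; simp at ha; subst ha; exact hxc)
    refine ⟨s, hs, ?_⟩
    simp only [card_singleton] at hcard
    omega
  by_cases h2 : L.length ≤ 2 * k
  · -- here k = 2, L.length = 4 (or k=1, impossible as len=3=2k+1 excluded; len ≥ k+2, ≤ 2k)
    obtain ⟨x, y, hxs, hxc, hys, hyc, hxy, hnadj⟩ := pick2 hH hL hmax (by omega)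
    have hPs : ({x, y} : Finset V) ⊆ suppF L := by
      intro a ha
      simp only [mem_insert, mem_singleton] at ha
      rcases ha with rfl | rfl <;> assumption
    have hPi : IndepOn H {x, y} := by
      intro a ha b hb hne hadj
      simp only [mem_insert, mem_singleton] at ha hb
      rcases ha with rfl | rfl <;> rcases hb with rfl | rfl
      · exact hne rfl
      · exact hnadj hadj
      · exact hnadj hadj.symm
      · exact hne rfl
    have hPc : ∀ a ∈ ({x, y} : Finset V), clean H L a := by
      intro a ha
      simp only [mem_insert, mem_singleton] at ha
      rcases ha with rfl | rfl <;> assumption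
    obtain ⟨s, hs, hcard⟩ := build hL hmax {x, y} hPs hPi hPc
    refine ⟨s, hs, ?_⟩
    rw [card_insert_of_notMem (by simpa using hxy), card_singleton] at hcard
    omega
  · -- L.length = 2k+1 with L.length ≥ k+2 : (k,len) ∈ {(1,3),(2,5)}
    have hlen' : L.length = 2 * k + 1 := by omega
    rcases (by omega : k = 1 ∨ k = 2) with rfl | rfl
    · -- length 3, two picks
      obtain ⟨x, y, hxs, hxc, hys, hyc, hxy, hnadj⟩ := pick2 hH hL hmax (by omega)
      have hPs : ({x, y} : Finset V) ⊆ suppF L := by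
        intro a ha
        simp only [mem_insert, mem_singleton] at ha
        rcases ha with rfl | rfl <;> assumption
      have hPi : IndepOn H {x, y} := by
        intro a ha b hb hne hadj
        simp only [mem_insert, mem_singleton] at ha hb
        rcases ha with rfl | rfl <;> rcases hb with rfl | rfl
        · exact hne rfl
        · exact hnadj hadj
        · exact hnadj hadj.symm
        · exact hne rfl
      have hPc : ∀ a ∈ ({x, y} : Finset V), clean H L a := by
        intro a ha
        simp only [mem_insert, mem_singleton] at ha
        rcases ha with rfl | rfl <;> assumption
      obtain ⟨s, hs, hcard⟩ := build hL hmax {x, y} hPs hPi hPc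
      refine ⟨s, hs, ?_⟩
      rw [card_insert_of_notMem (by simpa using hxy), card_singleton] at hcard
      omega
    · -- length 5
      obtain ⟨s, hs, hcard⟩ := final5 hH hL hmax (by omega)
      exact ⟨s, hs, by omega⟩

end CoreMain


section MainGlue

lemma exists_max_matching (H : SimpleGraph V) :
    ∃ L, ValidM H L ∧ ∀ L', ValidM H L' → L'.length ≤ L.length := by
  classical
  set P : ℕ → Prop := fun m => ∃ L, ValidM H L ∧ L.length = m with hP
  have hP0 : P 0 := ⟨[], ⟨by simp, by simp⟩, rfl⟩
  have hbound : ∀ m, P m → m ≤ Fintype.card V := by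
    rintro m ⟨L, hL, rfl⟩
    have := two_mul_length_le hL
    omega
  have hex : P (Nat.findGreatest P (Fintype.card V)) :=
    Nat.findGreatest_spec (Nat.zero_le _) hP0
  obtain ⟨L, hL, hlen⟩ := hex
  refine ⟨L, hL, fun L' hL' => ?_⟩
  rw [hlen]
  exact Nat.le_findGreatest (hbound _ ⟨L', hL', rfl⟩) ⟨L', hL', rfl⟩

lemma chrom_le (G : SimpleGraph V) {L : List (V × V)} (hL : ValidM Gᶜ L) :
    G.chromaticNumber.toNat + L.length ≤ Fintype.card V := by
  classical
  have h2l := two_mul_length_le hL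
  have huniq : ∀ v, v ∈ suppF L → ∃! p, p ∈ L.toFinset ∧ (v = p.1 ∨ v = p.2) := by
    intro v hv
    rw [mem_suppF] at hv
    obtain ⟨p, hp, hvp⟩ := hv
    refine ⟨p, ⟨List.mem_toFinset.2 hp, hvp⟩, ?_⟩
    rintro q ⟨hq, hvq⟩
    by_contra hne
    exact dp_ne (hL.dp' (List.mem_toFinset.1 hq) hp hne) hvq hvp rfl
  let C : V → ({p // p ∈ L.toFinset} ⊕ {v // v ∈ US L}) := fun v =>
    if h : v ∈ suppF L then
      Sum.inl ⟨Finset.choose _ L.toFinset (huniq v h),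
        Finset.choose_mem _ L.toFinset (huniq v h)⟩
    else Sum.inr ⟨v, by
      rw [mem_US]; intro p hp
      constructor <;> (rintro rfl; exact h (by rw [mem_suppF]; exact ⟨p, hp, by tauto⟩))⟩
  have hvalid : ∀ {v w : V}, G.Adj v w → C v ≠ C w := by
    intro v w hadj hEq
    simp only [C] at hEq
    by_cases hv : v ∈ suppF L <;> by_cases hw : w ∈ suppF L <;>
      simp only [hv, hw, dif_pos, dif_neg, not_false_iff] at hEq
    · have h1 := Finset.choose_property (fun p => v = p.1 ∨ v = p.2) L.toFinset (huniq v hv)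
      have h2 := Finset.choose_property (fun p => w = p.1 ∨ w = p.2) L.toFinset (huniq w hw)
      have hPQ : Finset.choose _ L.toFinset (huniq v hv)
          = Finset.choose _ L.toFinset (huniq w hw) :=
        congrArg Subtype.val (Sum.inl.inj hEq)
      obtain ⟨p, hpdef⟩ : ∃ p, Finset.choose (fun q => v = q.1 ∨ v = q.2) L.toFinset
          (huniq v hv) = p := ⟨_, rfl⟩
      rw [hpdef] at h1 hPQ
      rw [← hPQ] at h2
      have hmemF := Finset.choose_mem (fun q => v = q.1 ∨ v = q.2) L.toFinset (huniq v hv)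
      rw [hpdef] at hmemF
      have hmem : p ∈ L := List.mem_toFinset.1 hmemF
      have hcadj : ¬ G.Adj p.1 p.2 := by
        have := hL.adj' hmem
        rw [compl_adj] at this
        exact this.2
      rcases h1 with rfl | rfl <;> rcases h2 with h2 | h2
      · exact hadj.ne h2.symm
      · rw [← h2] at hcadj; exact hcadj hadj
      · rw [← h2] at hcadj; exact hcadj hadj.symm
      · exact hadj.ne h2.symm
    · exact Sum.inl_ne_inr hEq
    · exact Sum.inr_ne_inl hEq
    · exact hadj.ne (congrArg Subtype.val (Sum.inr.inj hEq))
  have hcol : G.Colorable (Fintype.card ({p // p ∈ L.toFinset} ⊕ {v // v ∈ US L})) :=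
    (Coloring.mk C hvalid).colorable
  have hchi := hcol.chromaticNumber_le
  have hcard : Fintype.card ({p // p ∈ L.toFinset} ⊕ {v // v ∈ US L})
      = L.length + (Fintype.card V - 2 * L.length) := by
    rw [Fintype.card_sum, Fintype.card_coe, Fintype.card_coe,
      List.toFinset_card_of_nodup hL.nodup, US_card hL]
  rw [hcard] at hchi
  have htoNat : G.chromaticNumber.toNat ≤ L.length + (Fintype.card V - 2 * L.length) := by
    have h2 := ENat.toNat_le_toNat hchi (ENat.coe_ne_top _)
    rwa [ENat.toNat_coe] at h2
  omega

lemma clique_of_indep (G : SimpleGraph V) {s : Finset V} (h : IndepOn Gᶜ s) :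
    s.card ≤ G.cliqueNum := by
  have hc : G.IsClique (s : Set V) := by
    intro x hx y hy hne
    by_contra hno
    exact h x hx y hy hne (by rw [compl_adj]; exact ⟨hne, hno⟩)
  exact hc.card_le_cliqueNum

lemma alpha2 (G : SimpleGraph V) (h3 : Gᶜ.CliqueFree 3) (k : ℕ) (hk : k ≤ 2)
    (hcard : Fintype.card V ≤ G.chromaticNumber.toNat + 2 * k + 1) :
    G.chromaticNumber.toNat ≤ G.cliqueNum + k := by
  obtain ⟨L, hL, hmax⟩ := exists_max_matching Gᶜ
  have h1 := chrom_le G hL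
  have hlen : L.length ≤ 2 * k + 1 := by omega
  obtain ⟨s, hs, hcard_s⟩ := core h3 hL hmax k hk hlen
  have h2 := clique_of_indep G hs
  omega

end MainGlue


section Induction
universe u

lemma card_three {x y z : V} (hxy : x ≠ y) (hxz : x ≠ z) (hyz : y ≠ z) :
    ({x, y, z} : Finset V).card = 3 := by
  rw [card_insert_of_notMem (by simp [hxy, hxz]), card_insert_of_notMem (by simp [hyz]),
    card_singleton]

lemma step3 {V : Type u} [Fintype V] [DecidableEq V] (G : SimpleGraph V) {x y z : V}
    (hxy : x ≠ y) (hxz : x ≠ z) (hyz : y ≠ z)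
    (nxy : ¬G.Adj x y) (nxz : ¬G.Adj x z) (nyz : ¬G.Adj y z) :
    ∃ (W : Type u) (instW : Fintype W) (instD : DecidableEq W) (G' : SimpleGraph W),
      @Fintype.card W instW + 3 = Fintype.card V ∧
      G.chromaticNumber.toNat ≤ G'.chromaticNumber.toNat + 1 ∧
      G'.cliqueNum ≤ G.cliqueNum := by
  classical
  set us : Finset V := Finset.univ \ {x, y, z} with hus
  let W : Type u := {v // v ∈ us}
  let G' : SimpleGraph W := G.comap (Subtype.val)
  have hcardW : Fintype.card W + 3 = Fintype.card V := by
    have : us.card = Fintype.card V - 3 := by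
      rw [hus, card_sdiff_of_subset (subset_univ _), card_univ, card_three hxy hxz hyz]
    have h3 : ({x, y, z} : Finset V).card ≤ Fintype.card V := by
      rw [← card_univ]; exact card_le_card (subset_univ _)
    rw [card_three hxy hxz hyz] at h3
    simp only [W, Fintype.card_coe]
    omega
  refine ⟨W, inferInstance, inferInstance, G', hcardW, ?_, ?_⟩
  · -- chromatic bound
    have hc' : G'.Colorable (G'.chromaticNumber.toNat) := G'.colorable_chromaticNumber_of_fintype
    obtain ⟨C'⟩ := hc'
    set N := G'.chromaticNumber.toNat with hN
    let C : V → Option (Fin N) := fun v =>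
      if h : v ∈ us then some (C' ⟨v, h⟩) else none
    have hvalid : ∀ {v w : V}, G.Adj v w → C v ≠ C w := by
      intro v w hadj hEq
      simp only [C] at hEq
      by_cases hv : v ∈ us <;> by_cases hw : w ∈ us
      · rw [dif_pos hv, dif_pos hw] at hEq
        have : G'.Adj ⟨v, hv⟩ ⟨w, hw⟩ := hadj
        exact C'.valid this (Option.some.inj hEq)
      · rw [dif_pos hv, dif_neg hw] at hEq
        exact Option.some_ne_none _ hEq
      · rw [dif_neg hv, dif_pos hw] at hEq
        exact Option.some_ne_none _ hEq.symm
      · have hvT : v ∈ ({x, y, z} : Finset V) := by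
          by_contra hc; exact hv (by rw [hus]; simp [hc])
        have hwT : w ∈ ({x, y, z} : Finset V) := by
          by_contra hc; exact hw (by rw [hus]; simp [hc])
        simp only [mem_insert, mem_singleton] at hvT hwT
        rcases hvT with rfl | rfl | rfl <;> rcases hwT with rfl | rfl | rfl <;>
          first
            | exact hadj.ne rfl
            | exact nxy hadj | exact nxz hadj | exact nyz hadj
            | exact nxy hadj.symm | exact nxz hadj.symm | exact nyz hadj.symm
    have hcol : G.Colorable (Fintype.card (Option (Fin N))) :=
      (Coloring.mk C (fun {v w} h => hvalid h)).colorable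
    rw [Fintype.card_option, Fintype.card_fin] at hcol
    have := hcol.chromaticNumber_le
    have h2 := ENat.toNat_le_toNat this (ENat.coe_ne_top _)
    rwa [ENat.toNat_coe] at h2
  · -- clique bound
    obtain ⟨s, hs⟩ := G'.exists_isNClique_cliqueNum
    have hclique : G.IsClique ((s.map ⟨Subtype.val, Subtype.val_injective⟩ : Finset V) : Set V) := by
      intro a ha b hb hne
      simp only [coe_map, Set.mem_image, mem_coe, Function.Embedding.coeFn_mk] at ha hb
      obtain ⟨a', ha', rfl⟩ := ha
      obtain ⟨b', hb', rfl⟩ := hb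
      have : a' ≠ b' := fun h => hne (by rw [h])
      exact hs.isClique ha' hb' this
    have := hclique.card_le_cliqueNum
    rwa [card_map, hs.card_eq] at this

end Induction

section Final

lemma chrom_le_card (G : SimpleGraph V) : G.chromaticNumber.toNat ≤ Fintype.card V := by
  have := G.colorable_of_fintype.chromaticNumber_le
  have h2 := ENat.toNat_le_toNat this (ENat.coe_ne_top _)
  rwa [ENat.toNat_coe] at h2

lemma Pgen : ∀ k : ℕ, k ≤ 2 → ∀ (V : Type u) (_ : Fintype V) (_ : DecidableEq V)
    (G : SimpleGraph V),
    Fintype.card V ≤ G.chromaticNumber.toNat + 2 * k + 1 →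
    G.chromaticNumber.toNat ≤ G.cliqueNum + k := by
  intro k
  induction k with
  | zero =>
    intro _ V instF instD G hcard
    by_cases h3 : ∃ a b c : V, a ≠ b ∧ a ≠ c ∧ b ≠ c ∧ ¬G.Adj a b ∧ ¬G.Adj a c ∧ ¬G.Adj b c
    · obtain ⟨a, b, c, hab, hac, hbc, nab, nac, nbc⟩ := h3
      obtain ⟨W, instW, instDW, G', hcW, hchrom, hcl⟩ := step3 G hab hac hbc nab nac nbc
      have := @chrom_le_card W instW instDW G'
      omega
    · -- complement triangle-free
      have hcf : Gᶜ.CliqueFree 3 := by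
        intro s hs
        rw [is3Clique_iff] at hs
        obtain ⟨a, b, c, h1, h2, h3', rfl⟩ := hs
        rw [compl_adj] at h1 h2 h3'
        exact h3 ⟨a, b, c, h1.1, h2.1, h3'.1, h1.2, h2.2, h3'.2⟩
      exact alpha2 G hcf 0 (by omega) (by omega)
  | succ k ih =>
    intro hk V instF instD G hcard
    by_cases h3 : ∃ a b c : V, a ≠ b ∧ a ≠ c ∧ b ≠ c ∧ ¬G.Adj a b ∧ ¬G.Adj a c ∧ ¬G.Adj b c
    · obtain ⟨a, b, c, hab, hac, hbc, nab, nac, nbc⟩ := h3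
      obtain ⟨W, instW, instDW, G', hcW, hchrom, hcl⟩ := step3 G hab hac hbc nab nac nbc
      have hIH := ih (by omega) W instW instDW G' (by omega)
      omega
    · have hcf : Gᶜ.CliqueFree 3 := by
        intro s hs
        rw [is3Clique_iff] at hs
        obtain ⟨a, b, c, h1, h2, h3', rfl⟩ := hs
        rw [compl_adj] at h1 h2 h3'
        exact h3 ⟨a, b, c, h1.1, h2.1, h3'.1, h1.2, h2.2, h3'.2⟩
      exact alpha2 G hcf (k + 1) (by omega) (by omega)

end Final


end GapProof

theorem stmt_8 {V : Type*} [Fintype V] (G : SimpleGraph V)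
    (h : G.chromaticNumber.toNat - G.cliqueNum ≤ 3) :
    G.chromaticNumber.toNat + 2 * (G.chromaticNumber.toNat - G.cliqueNum) ≤
      Fintype.card V := by
  classical
  have hchi_card : G.chromaticNumber.toNat ≤ Fintype.card V := GapProof.chrom_le_card G
  by_cases hle : G.chromaticNumber.toNat ≤ G.cliqueNum
  · have h0 : G.chromaticNumber.toNat - G.cliqueNum = 0 := by omega
    rw [h0]
    simpa using hchi_card
  · push_neg at hle
    by_contra hcon
    push_neg at hcon
    have hP := GapProof.Pgen (G.chromaticNumber.toNat - G.cliqueNum - 1) (by omega) V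
      inferInstance inferInstance G (by omega)
    omega
end

section
/- Let r and q be integers with 3 ≤ q < r+3, and let G be a finite simple graph that is K_q-free, satisfies χ(G) ≥ r+1, and has the minimum possible number of vertices among all K_q-free finite simple graphs with chromatic number at least r+1 (i.e., |V(G)| = F_v(2_r;q)). Then the clique number of G equals q−1, i.e., G contains a clique on q−1 vertices. -/
open SimpleGraph

theorem stmt_11 (r q : ℕ) (hq : 3 ≤ q) (hqr : q < r + 3) {V : Type} [Fintype V]
    (G : SimpleGraph V) (hfree : G.CliqueFree q)
    (hchi : (r + 1 : ℕ∞) ≤ G.chromaticNumber)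
    (hmin : Fintype.card V = folkman r q) :
    G.cliqueNum = q - 1 ∧ ∃ s : Finset V, G.IsNClique (q - 1) s := by
  classical
  -- basic cardinality bound : r + 1 ≤ |V|
  have hcard : r + 1 ≤ Fintype.card V := by
    have h1 : G.chromaticNumber ≤ (Fintype.card V : ℕ∞) :=
      (G.colorable_of_fintype).chromaticNumber_le
    have h2 : ((r + 1 : ℕ) : ℕ∞) ≤ (Fintype.card V : ℕ∞) := by
      refine le_trans ?_ h1
      exact_mod_cast hchi
    exact_mod_cast h2
  -- main step : G has a clique on q - 1 vertices
  have hex : ∃ s : Finset V, G.IsNClique (q - 1) s := by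
    by_contra hno
    push_neg at hno
    have hfree' : G.CliqueFree (q - 1) := fun s hs => hno s hs
    -- find two distinct nonadjacent vertices
    have hvu : ∃ v u : V, v ≠ u ∧ ¬ G.Adj v u := by
      by_contra h
      push_neg at h
      obtain ⟨s, hsub, hscard⟩ :=
        Finset.exists_subset_card_eq
          (show q - 1 ≤ (Finset.univ : Finset V).card by
            rw [Finset.card_univ]; omega)
      refine hfree' s ⟨?_, hscard⟩
      intro a _ b _ hab
      exact h a b hab
    obtain ⟨v, u, hvu, hnadj⟩ := hvu
    -- smaller graph on the vertices other than v
    let u' : {x : V // x ≠ v} := ⟨u, hvu.symm⟩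
    let G' : SimpleGraph {x : V // x ≠ v} :=
      { Adj := fun a b => G.Adj a b ∨ (a = u' ∧ G.Adj v b) ∨ (b = u' ∧ G.Adj v a)
        symm := by
          constructor
          intro a b hab
          rcases hab with h | ⟨h1, h2⟩ | ⟨h1, h2⟩
          · exact Or.inl h.symm
          · exact Or.inr (Or.inr ⟨h1, h2⟩)
          · exact Or.inr (Or.inl ⟨h1, h2⟩)
        loopless := by
          constructor
          rintro a (h | ⟨h1, h2⟩ | ⟨h1, h2⟩)
          · exact G.loopless.irrefl _ h
          · subst h1; exact hnadj h2
          · subst h1; exact hnadj h2 }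
    -- homomorphism G →g G'
    let f : G →g G' :=
      { toFun := fun x => if h : x = v then u' else ⟨x, h⟩
        map_rel' := by
          intro a b hab
          by_cases ha : a = v
          · have hb : b ≠ v := by
              rintro rfl
              rw [ha] at hab
              exact G.loopless.irrefl _ hab
            have hvb : G.Adj v b := by rwa [ha] at hab
            simp only [dif_pos ha, dif_neg hb]
            exact Or.inr (Or.inl ⟨rfl, hvb⟩)
          · by_cases hb : b = v
            · have hva : G.Adj v a := by
                have := hab.symm
                rwa [hb] at this
              simp only [dif_pos hb, dif_neg ha]
              exact Or.inr (Or.inr ⟨rfl, hva⟩)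
            · simp only [dif_neg ha, dif_neg hb]
              exact Or.inl hab }
    -- chromatic number of G' is at least r + 1
    have hchi' : (r + 1 : ℕ∞) ≤ G'.chromaticNumber := by
      refine le_trans hchi (chromaticNumber_le_of_forall_imp ?_)
      intro n hc
      exact ⟨hc.some.comp f⟩
    -- G' is K_q-free
    have hfreeG' : G'.CliqueFree q := by
      intro s hs
      have herase : G'.IsClique ((s.erase u') : Finset {x : V // x ≠ v}) :=
        hs.isClique.subset (s.erase_subset u')
      -- image in V is a clique in G
      have himclique : G.IsClique ((s.erase u').image Subtype.val : Finset V) := by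
        intro a ha b hb hab
        simp only [Finset.coe_image, Set.mem_image, Finset.mem_coe] at ha hb
        obtain ⟨a', ha', rfl⟩ := ha
        obtain ⟨b', hb', rfl⟩ := hb
        have hne : a' ≠ b' := fun h => hab (by rw [h])
        have := herase ha' hb' hne
        rcases this with h | ⟨h1, _⟩ | ⟨h1, _⟩
        · exact h
        · exact absurd h1 (Finset.ne_of_mem_erase ha')
        · exact absurd h1 (Finset.ne_of_mem_erase hb')
      have hcardim : q - 1 ≤ ((s.erase u').image Subtype.val).card := by
        rw [Finset.card_image_of_injective _ Subtype.val_injective]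
        by_cases hu : u' ∈ s
        · rw [Finset.card_erase_of_mem hu, hs.card_eq]
        · rw [Finset.erase_eq_of_notMem hu, hs.card_eq]; omega
      obtain ⟨t, htsub, htcard⟩ := Finset.exists_subset_card_eq hcardim
      exact hfree' t ⟨himclique.subset htsub, htcard⟩
    -- transfer to `Fin (card V - 1)`
    have hcardW : Fintype.card {x : V // x ≠ v} = Fintype.card V - 1 := by
      have := Fintype.card_subtype_compl (fun x : V => x = v)
      simpa [Fintype.card_subtype_eq] using this
    have hW : Fintype.card {x : V // x ≠ v} = Fintype.card V - 1 := hcardW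
    let e : Fin (Fintype.card V - 1) ≃ {x : V // x ≠ v} :=
      (Fintype.equivFinOfCardEq hW).symm
    let G'' : SimpleGraph (Fin (Fintype.card V - 1)) := G'.comap e.toEmbedding
    have hisol : G''.CliqueFree q := hfreeG'.comap (Embedding.comap e.toEmbedding G').isContained
    have hchi'' : (r + 1 : ℕ∞) ≤ G''.chromaticNumber := by
      refine le_trans hchi' ?_
      exact chromaticNumber_mono_of_hom ((Iso.comap e G').symm.toEmbedding).toHom
    have hmem : (Fintype.card V - 1) ∈ {n : ℕ | ∃ H : SimpleGraph (Fin n),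
        H.CliqueFree q ∧ (r + 1 : ℕ∞) ≤ H.chromaticNumber} :=
      ⟨G'', hisol, hchi''⟩
    have hle : folkman r q ≤ Fintype.card V - 1 := Nat.sInf_le hmem
    omega
  refine ⟨?_, hex⟩
  obtain ⟨s, hs⟩ := hex
  have hlow : q - 1 ≤ G.cliqueNum := by
    have := hs.isClique.card_le_cliqueNum
    rwa [hs.card_eq] at this
  have hup : G.cliqueNum ≤ q - 1 := by
    by_contra h
    push_neg at h
    obtain ⟨t, ht⟩ := G.exists_isNClique_cliqueNum
    obtain ⟨t', ht'sub, ht'card⟩ := Finset.exists_subset_card_eq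
      (show q ≤ t.card by rw [ht.card_eq]; omega)
    exact hfree t' ⟨ht.isClique.subset ht'sub, ht'card⟩
  omega
end

section
/- Let r ≥ 2 and q ≥ 3 be integers, and let G be a finite simple graph that is K_q-free and satisfies χ(G) ≥ r+1. Then |V(G)| ≥ F_v(2_{r−1};q) + α(G), where F_v(2_{r−1};q) is the minimum number of vertices of a K_q-free finite simple graph with chromatic number at least r, and α(G) is the independence number of G. -/
open SimpleGraph

theorem stmt_12 (r q : ℕ) (hr : 2 ≤ r) (hq : 3 ≤ q) {V : Type} [Fintype V]
    (G : SimpleGraph V) (hfree : G.CliqueFree q)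
    (hchi : (r + 1 : ℕ∞) ≤ G.chromaticNumber) :
    folkman (r - 1) q + Gᶜ.cliqueNum ≤ Fintype.card V := by
  classical
  obtain ⟨S, hS⟩ := Gᶜ.exists_isNClique_cliqueNum
  set H : SimpleGraph {v : V // v ∉ S} :=
    G.comap (Function.Embedding.subtype fun v => v ∉ S) with hH
  -- key: if H is n-colorable then G is (n+1)-colorable
  have key : ∀ n : ℕ, H.Colorable n → G.Colorable (n + 1) := by
    intro n ⟨C⟩
    refine ⟨SimpleGraph.Coloring.mk
      (fun v => if h : v ∈ S then Fin.last n else (C ⟨v, h⟩).castSucc) ?_⟩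
    intro u v huv
    by_cases hu : u ∈ S <;> by_cases hv : v ∈ S <;> simp [hu, hv]
    · exact (hS.1 hu hv (G.ne_of_adj huv)).2 huv
    · exact (Fin.castSucc_lt_last _).ne'
    · intro h
      exact C.valid (show H.Adj ⟨u, hu⟩ ⟨v, hv⟩ from huv) h
  -- H has chromatic number ≥ r
  have hHchi : ((r - 1 : ℕ) + 1 : ℕ∞) ≤ H.chromaticNumber := by
    by_contra hcon
    push_neg at hcon
    have : H.chromaticNumber ≤ (r - 1 : ℕ) := Order.le_of_lt_add_one hcon
    have hHc : H.Colorable (r - 1) := chromaticNumber_le_iff_colorable.mp this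
    have hGc : G.Colorable (r - 1 + 1) := key _ hHc
    have : G.chromaticNumber ≤ ((r - 1 + 1 : ℕ) : ℕ∞) :=
      chromaticNumber_le_iff_colorable.mpr hGc
    have hlt : ((r - 1 + 1 : ℕ) : ℕ∞) < ((r + 1 : ℕ) : ℕ∞) := by
      exact_mod_cast (by omega : r - 1 + 1 < r + 1)
    have := lt_of_le_of_lt this hlt
    rw [show ((r + 1 : ℕ) : ℕ∞) = (r : ℕ∞) + 1 by push_cast; ring] at this
    exact absurd hchi (not_le.mpr this)
  -- H is K_q-free
  have hHfree : H.CliqueFree q := by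
    have f : H ↪g G := Embedding.comap (Function.Embedding.subtype fun v => v ∉ S) G
    exact hfree.comap f.isContained
  -- transfer H to Fin n
  set n := Fintype.card {v : V // v ∉ S} with hn
  have e : Fin n ≃ {v : V // v ∉ S} := (Fintype.equivFin _).symm
  have hfolk : folkman (r - 1) q ≤ n := by
    apply Nat.sInf_le
    refine ⟨H.comap e, ?_, ?_⟩
    · exact hHfree.comap (Iso.comap e H).toEmbedding.isContained
    · have iso : H.comap ⇑e ≃g H := Iso.comap e H
      calc ((r - 1 : ℕ) + 1 : ℕ∞) ≤ H.chromaticNumber := hHchi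
        _ ≤ (H.comap ⇑e).chromaticNumber :=
          chromaticNumber_mono_of_hom iso.symm.toEmbedding.toHom
  have hcard : n + S.card = Fintype.card V := by
    have := Fintype.card_subtype_compl (fun v => v ∈ S)
    have h2 : Fintype.card {v : V // v ∈ S} = S.card := Fintype.card_coe S
    have h3 : S.card ≤ Fintype.card V := S.card_le_univ
    omega
  have : S.card = Gᶜ.cliqueNum := hS.2
  omega
end
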